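/- arXiv:2509.17764 — 14 statements merged into one kernel-verified Lean document; each statement's English description precedes it below -/
import Mathlib

section
/- For every n ≥ 1, the map F : 𝓠_n → 𝓕_n is a bijection (so F(𝓠_n) = 𝓕_n and Q(𝓕_n) = 𝓠_n), and consequently 𝓕_n contains exactly n! sequences of length n. -/
/-- `Qseq f` is the sequence `q = Q(f)` defined by `q(1) = 1` and
`q(n) = q(n - q(n-1)) + f(n)` for `n > 1`.  The nested index `n - q(n-1)`
lies in `{1,…,n-1}` whenever `1 ≤ q(n-1) ≤ n-1`; out-of-range indices
(which can occur only after the sequence has already died) are clamped. -/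
def Qseq (f : ℕ → ℤ) : ℕ → ℤ
  | 0 => 0
  | 1 => 1
  | n + 2 =>
      Qseq f (min (((n : ℤ) + 2 - Qseq f (n + 1)).toNat) (n + 1)) + f (n + 2)
termination_by n => n
decreasing_by
  · omega
  · omega

/-- Membership in `𝓠ₙ`: `1 ≤ q(i) ≤ i` for `1 ≤ i ≤ n`. -/
def memQn (n : ℕ) (q : ℕ → ℤ) : Prop := ∀ i : ℕ, 1 ≤ i → i ≤ n → 1 ≤ q i ∧ q i ≤ (i : ℤ)

/-- Membership in `𝓠`: `1 ≤ q(n) ≤ n` for all `n ≥ 1`. -/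
def memQ (q : ℕ → ℤ) : Prop := ∀ i : ℕ, 1 ≤ i → 1 ≤ q i ∧ q i ≤ (i : ℤ)

/-- `f ∈ 𝓕`: `f(1) = 0` and `Q(f) ∈ 𝓠`. -/
def memF (f : ℕ → ℤ) : Prop := f 1 = 0 ∧ memQ (Qseq f)

/-- `f ∈ 𝓕ₙ`: `f(1) = 0` and `Q(f) ∈ 𝓠ₙ`. -/
def memFn (n : ℕ) (f : ℕ → ℤ) : Prop := f 1 = 0 ∧ memQn n (Qseq f)

/-- `Fseq q = F(q)`: `f(1) = 0`, `f(n) = q(n) - q(n - q(n-1))` for `n > 1`. -/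
def Fseq (q : ℕ → ℤ) : ℕ → ℤ := fun n =>
  if n ≤ 1 then 0 else q n - q (((n : ℤ) - q (n - 1)).toNat)

/-- `Q'seq q = Q'(q)`: `q'(1) = 1`, `q'(n) = q(n - q(n-1))` for `n > 1`. -/
def Q'seq (q : ℕ → ℤ) : ℕ → ℤ := fun n =>
  if n ≤ 1 then 1 else q (((n : ℤ) - q (n - 1)).toNat)

/-- The truncation to indices `1,…,n` of `F(q)`. -/
def truncF (n : ℕ) (q : ℕ → ℤ) : ℕ → ℤ := fun i =>
  if 1 ≤ i ∧ i ≤ n then Fseq q i else 0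

/-- The truncation to indices `1,…,n` of `Q(f)`. -/
def truncQ (n : ℕ) (f : ℕ → ℤ) : ℕ → ℤ := fun i =>
  if 1 ≤ i ∧ i ≤ n then Qseq f i else 0

/-- `𝓠ₙ`, realised as sequences vanishing outside `{1,…,n}`. -/
def QnSet (n : ℕ) : Set (ℕ → ℤ) :=
  {q | (∀ i : ℕ, 1 ≤ i → i ≤ n → 1 ≤ q i ∧ q i ≤ (i : ℤ)) ∧
    ∀ i : ℕ, ¬(1 ≤ i ∧ i ≤ n) → q i = 0}

/-- `𝓕ₙ := F(𝓠ₙ)`. -/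
def FnSet (n : ℕ) : Set (ℕ → ℤ) := truncF n '' QnSet n

lemma key {n : ℕ} {q : ℕ → ℤ} (hq : q ∈ QnSet n) :
    ∀ i : ℕ, 1 ≤ i → i ≤ n → Qseq (truncF n q) i = q i := by
  intro i
  induction i using Nat.strong_induction_on with
  | _ i IH =>
    intro h1 h2
    match i, h1 with
    | 1, _ =>
      have := hq.1 1 le_rfl h2
      simp [Qseq]
      omega
    | (k+2), _ =>
      have hk1 : Qseq (truncF n q) (k+1) = q (k+1) := IH (k+1) (by omega) (by omega) (by omega)
      have hb : 1 ≤ q (k+1) ∧ q (k+1) ≤ (k+1 : ℤ) := by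
        have := hq.1 (k+1) (by omega) (by omega)
        exact_mod_cast this
      set m : ℕ := (((k : ℤ) + 2 - q (k+1)).toNat) with hm
      have hm1 : 1 ≤ m := by omega
      have hm2 : m ≤ k + 1 := by omega
      have hmin : min m (k+1) = m := by omega
      have hmq : Qseq (truncF n q) m = q m := IH m (by omega) hm1 (by omega)
      rw [Qseq, hk1, ← hm, hmin, hmq]
      have : truncF n q (k+2) = q (k+2) - q m := by
        simp only [truncF, Fseq]
        rw [if_pos ⟨by omega, h2⟩, if_neg (by omega)]
        congr 2
      rw [this]; ring

lemma truncQF {n : ℕ} {q : ℕ → ℤ} (hq : q ∈ QnSet n) : truncQ n (truncF n q) = q := by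
  funext i
  by_cases h : 1 ≤ i ∧ i ≤ n
  · simp only [truncQ, if_pos h]
    exact key hq i h.1 h.2
  · simp only [truncQ, if_neg h]
    exact (hq.2 i h).symm

noncomputable def QnEquiv (n : ℕ) : QnSet n ≃ (∀ i : Fin n, Fin (i + 1)) where
  toFun q i := ⟨(q.1 (i + 1) - 1).toNat, by
    have := q.2.1 (i + 1) (by omega) (by omega)
    have : q.1 (i+1) ≤ ((i : ℕ) : ℤ) + 1 := by push_cast at this ⊢; omega
    have h1 := (q.2.1 (i + 1) (by omega) (by omega)).1
    omega⟩
  invFun g := ⟨fun i => if h : 1 ≤ i ∧ i ≤ n then ((g ⟨i - 1, by omega⟩ : ℕ) + 1 : ℤ) else 0, by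
    constructor
    · intro i h1 h2
      dsimp only
      rw [dif_pos ⟨h1, h2⟩]
      have hlt := (g ⟨i - 1, by omega⟩).isLt
      simp only [Fin.val_mk] at hlt
      constructor
      · have : (0:ℤ) ≤ ((g ⟨i - 1, by omega⟩ : ℕ) : ℤ) := Int.natCast_nonneg _
        omega
      · push_cast
        omega
    · intro i h; dsimp only; rw [dif_neg h]⟩
  left_inv q := by
    apply Subtype.ext
    funext i
    by_cases h : 1 ≤ i ∧ i ≤ n
    · dsimp only
      rw [dif_pos h]
      have h1 := (q.2.1 i h.1 h.2).1
      have : (i - 1) + 1 = i := by omega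
      simp only [this]
      have : ((q.1 i - 1).toNat : ℤ) = q.1 i - 1 := Int.toNat_of_nonneg (by omega)
      rw [this]; ring
    · dsimp only
      rw [dif_neg h]
      exact (q.2.2 i h).symm
  right_inv g := by
    funext i
    apply Fin.ext
    have hr : 1 ≤ (i : ℕ) + 1 ∧ (i : ℕ) + 1 ≤ n := ⟨by omega, by omega⟩
    dsimp only
    rw [dif_pos hr]
    show (((g i : ℕ) : ℤ) + 1 - 1).toNat = (g i : ℕ)
    omega

lemma card_Qn (n : ℕ) : Nat.card (QnSet n) = Nat.factorial n := by
  rw [Nat.card_congr (QnEquiv n), Nat.card_eq_fintype_card, Fintype.card_pi]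
  simp only [Fintype.card_fin]
  rw [Fin.prod_univ_eq_prod_range (fun i => i + 1) n]
  exact Finset.prod_range_add_one_eq_factorial n

/-- For every `n ≥ 1`, `F : 𝓠ₙ → 𝓕ₙ` is a bijection
(`F(𝓠ₙ) = 𝓕ₙ` and `Q(𝓕ₙ) = 𝓠ₙ`), and `𝓕ₙ` contains exactly `n!` sequences. -/
theorem stmt_1 (n : ℕ) (hn : 1 ≤ n) :
    Set.BijOn (truncF n) (QnSet n) (FnSet n) ∧
    truncQ n '' FnSet n = QnSet n ∧
    Nat.card (FnSet n) = Nat.factorial n := by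
  have hinj : Set.InjOn (truncF n) (QnSet n) := by
    intro q1 h1 q2 h2 h
    rw [← truncQF h1, ← truncQF h2, h]
  refine ⟨hinj.bijOn_image, ?_, ?_⟩
  · ext q
    constructor
    · rintro ⟨f, ⟨p, hp, rfl⟩, rfl⟩
      rw [truncQF hp]; exact hp
    · intro hq
      exact ⟨truncF n q, ⟨q, hq, rfl⟩, truncQF hq⟩
  · have : Nat.card (FnSet n) = Nat.card (QnSet n) := by
      rw [Nat.card_coe_set_eq, Nat.card_coe_set_eq, FnSet,
        Set.ncard_image_of_injOn hinj]
    rw [this, card_Qn]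
end

section
/- Fix n > 2. The bounds 3 − n ≤ f(n) ≤ n − 1 for members of 𝓕_n are sharp: (i) the sequence f_u defined by f_u(i) = i − 1 for 1 ≤ i ≤ n belongs to 𝓕_n and attains f_u(n) = n − 1; (ii) the sequence f_l consisting of n − 3 zeroes followed by the three terms n − 3, 1, 3 − n belongs to 𝓕_n and attains f_l(n) = 3 − n. -/
def gaux (m : ℕ) : ℕ → ℤ := fun i =>
  if i = 0 then 0 else if i ≤ m then 1 else if i = m + 1 then (m : ℤ) + 1
  else if i = m + 2 then 2 else 1

lemma qu_eq (fu : ℕ → ℤ) (hfu : ∀ i : ℕ, fu i = (i : ℤ) - 1) :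
    ∀ i : ℕ, Qseq fu i = if i = 0 then 0 else (i : ℤ) := by
  intro i
  induction i with
  | zero => rw [Qseq]; simp
  | succ k ih =>
    match k, ih with
    | 0, _ => rw [Qseq]; norm_num
    | j + 1, ih =>
      have h1 : Qseq fu (j + 1) = (j : ℤ) + 1 := by rw [ih]; simp
      have h2 : min (((j : ℤ) + 2 - Qseq fu (j + 1)).toNat) (j + 1) = 1 := by
        rw [h1]; norm_num
      rw [Qseq, h2, Qseq, hfu]
      simp
      ring

lemma ql_eq (m : ℕ) (fl : ℕ → ℤ)
    (hfl : ∀ i : ℕ, fl i = if i ≤ m then 0 else if i = m + 1 then (m : ℤ)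
      else if i = m + 2 then 1 else if i = m + 3 then -(m : ℤ) else 0) :
    ∀ i : ℕ, i ≤ m + 3 → Qseq fl i = gaux m i := by
  intro i
  induction i using Nat.strong_induction_on with
  | _ i ih =>
    match i, ih with
    | 0, _ => intro _; rw [Qseq]; simp [gaux]
    | 1, _ =>
      intro _; rw [Qseq]
      simp only [gaux]
      rcases Nat.eq_zero_or_pos m with hm | hm
      · subst hm; norm_num
      · simp [hm, Nat.one_le_iff_ne_zero.mp hm]
    | j + 2, ih =>
      intro hle
      have ih1 : Qseq fl (j + 1) = gaux m (j + 1) := ih (j + 1) (by omega) (by omega)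
      rcases lt_or_ge (j + 2) (m + 1) with h | h
      · -- j+2 ≤ m
        have hj : j + 2 ≤ m := by omega
        have hg1 : gaux m (j + 1) = 1 := by simp [gaux]; omega
        have h2 : min (((j : ℤ) + 2 - Qseq fl (j + 1)).toNat) (j + 1) = j + 1 := by
          rw [ih1, hg1]
          have : ((j : ℤ) + 2 - 1).toNat = j + 1 := by omega
          rw [this]; simp
        rw [Qseq, h2, ih1, hg1, hfl]
        simp [hj, gaux]
      · rcases Nat.eq_or_lt_of_le h with h1 | h1
        · -- j + 2 = m + 1, so m = j + 1 ≥ 1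
          have hg1 : gaux m (j + 1) = 1 := by simp [gaux]; omega
          have h2 : min (((j : ℤ) + 2 - Qseq fl (j + 1)).toNat) (j + 1) = j + 1 := by
            rw [ih1, hg1]
            have : ((j : ℤ) + 2 - 1).toNat = j + 1 := by omega
            rw [this]; simp
          rw [Qseq, h2, ih1, hg1, hfl]
          have hc1 : ¬ (j + 2 ≤ m) := by omega
          have hc2 : j + 2 = m + 1 := by omega
          simp [hc1, hc2, gaux]
          omega
        · rcases Nat.eq_or_lt_of_le h1 with h2 | h2
          · -- j + 2 = m + 2, so j = m
            have hm : j = m := by omega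
            subst hm
            have hg1 : gaux j (j + 1) = (j : ℤ) + 1 := by simp [gaux]
            have hmin : min (((j : ℤ) + 2 - Qseq fl (j + 1)).toNat) (j + 1) = 1 := by
              rw [ih1, hg1]
              have : ((j : ℤ) + 2 - ((j : ℤ) + 1)).toNat = 1 := by omega
              rw [this]; simp
            rw [Qseq, hmin, Qseq, hfl]
            have hc1 : ¬ (j + 2 ≤ j) := by omega
            have hc2 : ¬ (j + 2 = j + 1) := by omega
            simp [hc1, hc2, gaux]
          · -- j + 2 = m + 3, so j = m + 1
            have hm : j = m + 1 := by omega
            subst hm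
            have hg1 : gaux m (m + 1 + 1) = 2 := by
              show gaux m (m + 2) = 2; simp [gaux]
            have hmin : min ((((m : ℤ) + 1) + 2 - Qseq fl (m + 1 + 1)).toNat) (m + 1 + 1)
                = m + 1 := by
              rw [ih1, hg1]
              have : (((m : ℤ) + 1) + 2 - 2).toNat = m + 1 := by omega
              rw [this]; simp
            have ihm : Qseq fl (m + 1) = gaux m (m + 1) := ih (m + 1) (by omega) (by omega)
            have hg2 : gaux m (m + 1) = (m : ℤ) + 1 := by simp [gaux]
            rw [Qseq]
            push_cast
            rw [hmin, ihm, hg2, hfl]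
            have hc1 : ¬ (m + 1 + 2 ≤ m) := by omega
            have hc2 : ¬ (m + 1 + 2 = m + 1) := by omega
            have hc3 : ¬ (m + 1 + 2 = m + 2) := by omega
            have hc4 : m + 1 + 2 = m + 3 := by omega
            simp [hc1, hc2, hc3, hc4, gaux]

/-- The bounds `3 - n ≤ f(n) ≤ n - 1` on `𝓕ₙ` (for fixed `n > 2`)
are sharp: `f_u(i) = i - 1` is in `𝓕ₙ` and attains the upper bound at `n`, while
`f_l = (0,…,0, n-3, 1, 3-n)` (with `n-3` zeroes) is in `𝓕ₙ` and attains the lower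
bound at `n`. -/
theorem stmt_4 (n : ℕ) (hn : 2 < n) (fu fl : ℕ → ℤ)
    (hfu : ∀ i : ℕ, fu i = (i : ℤ) - 1)
    (hfl : ∀ i : ℕ, fl i =
      if i ≤ n - 3 then 0
      else if i = n - 2 then (n : ℤ) - 3
      else if i = n - 1 then 1
      else if i = n then 3 - (n : ℤ)
      else 0) :
    memFn n fu ∧ fu n = (n : ℤ) - 1 ∧ memFn n fl ∧ fl n = 3 - (n : ℤ) := by
  obtain ⟨m, rfl⟩ : ∃ m, n = m + 3 := ⟨n - 3, by omega⟩
  have hqu := qu_eq fu hfu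
  have hfl' : ∀ i : ℕ, fl i = if i ≤ m then 0 else if i = m + 1 then (m : ℤ)
      else if i = m + 2 then 1 else if i = m + 3 then -(m : ℤ) else 0 := by
    intro i
    rw [hfl]
    have e1 : m + 3 - 3 = m := by omega
    have e2 : m + 3 - 2 = m + 1 := by omega
    have e3 : m + 3 - 1 = m + 2 := by omega
    rw [e1, e2, e3]
    split_ifs <;> push_cast <;> ring
  have hql := ql_eq m fl hfl'
  refine ⟨⟨by rw [hfu]; norm_num, fun i hi1 hi2 => ?_⟩, hfu _, ⟨?_, fun i hi1 hi2 => ?_⟩, ?_⟩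
  · rw [hqu i, if_neg (by omega : ¬ i = 0)]
    omega
  · rw [hfl' 1]
    split_ifs <;> omega
  · rw [hql i hi2]
    simp only [gaux]
    split_ifs <;> omega
  · rw [hfl' (m + 3)]
    split_ifs <;> omega
end

section
/- Let α ∈ [1/2, 1) and define q(n) = 1 + ⌊αn⌋ for n ≥ 1. Then q(1) = 1, q is slow (hence q ∈ 𝓠), and the sequence f = F(q) is also slow. -/
/-- A sequence is slow if successive differences are 0 or 1. -/
def Slow (a : ℕ → ℤ) : Prop := ∀ n : ℕ, 1 ≤ n → a (n + 1) - a n = 0 ∨ a (n + 1) - a n = 1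

/-- For `α ∈ [1/2, 1)` and `q(n) = 1 + ⌊αn⌋`: `q(1) = 1`, `q` is slow
(hence `q ∈ 𝓠`), and `f = F(q)` is also slow. -/
theorem stmt_5 (α : ℝ) (hα1 : 1/2 ≤ α) (hα2 : α < 1)
    (q : ℕ → ℤ) (hq : ∀ n : ℕ, q n = 1 + ⌊α * n⌋) :
    q 1 = 1 ∧ Slow q ∧ memQ q ∧ Slow (Fseq q) := by
  have h0 : (0:ℝ) ≤ α := by linarith
  set G : ℕ → ℤ := fun k => ⌊α * k⌋ with hG
  have hqG : ∀ n : ℕ, q n = 1 + G n := hq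
  have gmono : ∀ a b : ℕ, a ≤ b → G a ≤ G b := by
    intro a b h
    exact Int.floor_le_floor (mul_le_mul_of_nonneg_left (by exact_mod_cast h) h0)
  have gstep : ∀ k : ℕ, G (k + 1) ≤ G k + 1 := by
    intro k
    have h1 := Int.lt_floor_add_one (α * k)
    have : α * ((k:ℕ)+1 : ℕ) < ((G k + 1 : ℤ) + 1 : ℤ) := by push_cast; push_cast at h1; nlinarith
    have := Int.floor_lt.mpr this
    simp only [hG] at *
    omega
  have gnonneg : ∀ k : ℕ, 0 ≤ G k := by
    intro k
    exact Int.floor_nonneg.mpr (by positivity)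
  have gub : ∀ k : ℕ, 1 ≤ k → G k ≤ (k : ℤ) - 1 := by
    intro k hk
    have hk' : (1:ℝ) ≤ (k:ℝ) := by exact_mod_cast hk
    have : α * (k:ℕ) < ((k : ℤ) : ℝ) := by push_cast; nlinarith
    have := Int.floor_lt.mpr this
    simp only [hG] at *
    omega
  have key3 : ∀ k : ℕ, G (k + 1) = G k → G (k + 2) = G k + 1 := by
    intro k h
    have h1 : ((G k : ℤ) : ℝ) ≤ α * k := Int.floor_le _
    have h2 : ((G k + 1 : ℤ) : ℝ) ≤ α * ((k:ℕ) + 2 : ℕ) := by push_cast; push_cast at h1; nlinarith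
    have h3 : G k + 1 ≤ G (k + 2) := Int.le_floor.mpr h2
    have h4 : G (k + 2) ≤ G (k + 1) + 1 := gstep (k+1)
    simp only [hG] at *
    omega
  have hq1 : q 1 = 1 := by
    have : G 1 = 0 := by
      simp only [hG]
      push_cast
      rw [mul_one]
      exact Int.floor_eq_zero_iff.mpr ⟨h0, hα2⟩
    rw [hqG 1, this]; norm_num
  refine ⟨hq1, ?_, ?_, ?_⟩
  · intro n _
    rw [hqG (n+1), hqG n]
    have := gmono n (n+1) (by omega)
    have := gstep n
    omega
  · intro i hi
    rw [hqG i]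
    have := gnonneg i
    have := gub i hi
    omega
  · intro n hn
    match n, hn with
    | 1, _ =>
      have hG2 : G 2 = 1 := by
        simp only [hG]
        rw [Int.floor_eq_iff]
        push_cast
        constructor <;> nlinarith
      have e1 : Fseq q 1 = 0 := by simp [Fseq]
      have e2 : Fseq q 2 = 1 := by
        have : ((2:ℕ) : ℤ) - q (2 - 1) = 1 := by rw [hq1]; norm_num
        simp only [Fseq, this]
        norm_num
        rw [hqG 2, hq1, hG2]
        ring
      rw [e1, e2]; right; ring
    | (m + 2), _ =>
      -- indices
      have hqm1 : q (m + 1) = 1 + G (m + 1) := hqG (m+1)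
      have hqm2 : q (m + 2) = 1 + G (m + 2) := hqG (m+2)
      have hb1 := gnonneg (m+1)
      have hb1' := gub (m+1) (by omega)
      have hb2 := gnonneg (m+2)
      have hb2' := gub (m+2) (by omega)
      set a : ℕ := (((m + 2 : ℕ) : ℤ) - q (m + 2 - 1)).toNat with ha
      set b : ℕ := (((m + 3 : ℕ) : ℤ) - q (m + 3 - 1)).toNat with hb
      have haz : (a : ℤ) = (m : ℤ) + 1 - G (m + 1) := by
        have h : ((m + 2 : ℕ) : ℤ) - q (m + 2 - 1) = (m : ℤ) + 1 - G (m + 1) := by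
          have : m + 2 - 1 = m + 1 := by omega
          rw [this, hqm1]; push_cast; ring
        rw [ha, h, Int.toNat_of_nonneg (by omega)]
      have hbz : (b : ℤ) = (m : ℤ) + 2 - G (m + 2) := by
        have h : ((m + 3 : ℕ) : ℤ) - q (m + 3 - 1) = (m : ℤ) + 2 - G (m + 2) := by
          have : m + 3 - 1 = m + 2 := by omega
          rw [this, hqm2]; push_cast; ring
        rw [hb, h, Int.toNat_of_nonneg (by omega)]
      have e1 : Fseq q (m + 2) = G (m + 2) - G a := by
        simp only [Fseq, ← ha]
        rw [if_neg (by omega), hqG (m+2), hqG a]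
        ring
      have e2 : Fseq q (m + 3) = G (m + 3) - G b := by
        simp only [Fseq, ← hb]
        rw [if_neg (by omega), hqG (m+3), hqG b]
        ring
      have hcase : G (m + 2) ≤ G (m + 1) + 1 := gstep (m+1)
      have hcase' := gmono (m+1) (m+2) (by omega)
      rcases (by omega : G (m+2) = G (m+1) + 1 ∨ G (m+2) = G (m+1)) with hc | hc
      · -- b = a
        have hab : b = a := by omega
        have h1 : G (m + 3) ≤ G (m + 2) + 1 := gstep (m+2)
        have h2 := gmono (m+2) (m+3) (by omega)
        rw [e1, e2, hab]
        omega
      · -- b = a + 1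
        have hab : b = a + 1 := by omega
        have h3 : G (m + 3) = G (m + 1) + 1 := key3 (m+1) hc
        have h4 : G (a + 1) ≤ G a + 1 := gstep a
        have h5 := gmono a (a+1) (by omega)
        rw [e1, e2, hab]
        omega
end

section
/- Fix a positive integer δ and define f(n) = δ⌊(n−1)/δ⌋ for n ≥ 1. Then f ∈ 𝓕, the sequence q = Q(f) is given by q(n) = 1 + δ⌊(n−1)/δ⌋ for all n ≥ 1, the nested term q'(n) = q(n − q(n−1)) equals 1 for all n > 1, and both f and q are monotonically nondecreasing. -/
theorem stmt6_key (δ : ℕ) (hδ : 1 ≤ δ) (f : ℕ → ℤ)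
    (hf : ∀ n : ℕ, f n = (δ : ℤ) * (((n - 1) / δ : ℕ) : ℤ)) :
    ∀ n : ℕ, 1 ≤ n → Qseq f n = 1 + (δ : ℤ) * (((n - 1) / δ : ℕ) : ℤ) := by
  intro n
  induction n using Nat.strong_induction_on with
  | _ n ih =>
    intro hn
    match n, hn with
    | 1, _ => simp [Qseq]
    | (m+2), _ =>
      rw [Qseq]
      have h1 : Qseq f (m+1) = 1 + (δ:ℤ) * ((m/δ : ℕ):ℤ) := by
        have := ih (m+1) (by omega) (by omega)
        simpa using this
      have h2 : (δ:ℤ) * ((m/δ:ℕ):ℤ) + ((m%δ:ℕ):ℤ) = (m:ℤ) := by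
        exact_mod_cast Nat.div_add_mod m δ
      have hidx : ((m:ℤ)+2 - Qseq f (m+1)).toNat = m % δ + 1 := by
        rw [h1]; omega
      have hmin : min (((m:ℤ)+2 - Qseq f (m+1)).toNat) (m+1) = m % δ + 1 := by
        rw [hidx]
        have : m % δ ≤ m := Nat.mod_le m δ
        omega
      rw [hmin]
      have h3 : Qseq f (m % δ + 1) = 1 := by
        have := ih (m % δ + 1) (by have := Nat.mod_le m δ; omega) (by omega)
        simp only [Nat.add_sub_cancel] at this
        rw [this, Nat.div_eq_of_lt (Nat.mod_lt m hδ)]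
        simp
      rw [h3, hf]

/-- For fixed `δ ≥ 1` and `f(n) = δ⌊(n-1)/δ⌋`: `f ∈ 𝓕`,
`q = Q(f)` is given by `q(n) = 1 + δ⌊(n-1)/δ⌋`, the nested term `q'(n) = 1` for
all `n > 1`, and both `f` and `q` are monotonically nondecreasing. -/
theorem stmt_6 (δ : ℕ) (hδ : 1 ≤ δ) (f : ℕ → ℤ)
    (hf : ∀ n : ℕ, f n = (δ : ℤ) * (((n - 1) / δ : ℕ) : ℤ)) :
    memF f ∧
    (∀ n : ℕ, 1 ≤ n → Qseq f n = 1 + (δ : ℤ) * (((n - 1) / δ : ℕ) : ℤ)) ∧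
    (∀ n : ℕ, 1 < n → Q'seq (Qseq f) n = 1) ∧
    (∀ n : ℕ, 1 ≤ n → f n ≤ f (n + 1)) ∧
    (∀ n : ℕ, 1 ≤ n → Qseq f n ≤ Qseq f (n + 1)) := by
  have key := stmt6_key δ hδ f hf
  have hq1 : Qseq f 1 = 1 := by simp [Qseq]
  refine ⟨⟨by rw [hf]; simp, ?_⟩, key, ?_, ?_, ?_⟩
  · intro i hi
    rw [key i hi]
    constructor
    · have h0 : (0:ℤ) ≤ (δ:ℤ) * (((i-1)/δ:ℕ):ℤ) := by positivity
      linarith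
    · have := Nat.mul_div_le (i-1) δ
      have hcast : (δ:ℤ) * (((i-1)/δ : ℕ):ℤ) ≤ ((i:ℤ) - 1) := by
        have : ((δ * ((i-1)/δ) : ℕ):ℤ) ≤ ((i-1 : ℕ):ℤ) := by exact_mod_cast this
        push_cast at this
        omega
      omega
  · intro n hn
    unfold Q'seq
    rw [if_neg (by omega)]
    have h1 : Qseq f (n-1) = 1 + (δ:ℤ) * (((n-1-1)/δ : ℕ):ℤ) := key (n-1) (by omega)
    have h2 : (δ:ℤ) * (((n-2)/δ:ℕ):ℤ) + (((n-2)%δ:ℕ):ℤ) = ((n-2 : ℕ):ℤ) := by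
      exact_mod_cast Nat.div_add_mod (n-2) δ
    have hn2 : n - 1 - 1 = n - 2 := by omega
    rw [hn2] at h1
    have hidx : ((n:ℤ) - Qseq f (n-1)).toNat = (n-2) % δ + 1 := by
      rw [h1]; omega
    rw [hidx, key _ (by omega)]
    rw [Nat.add_sub_cancel, Nat.div_eq_of_lt (Nat.mod_lt _ hδ)]
    simp
  · intro n hn
    rw [hf, hf]
    have : (n-1)/δ ≤ (n+1-1)/δ := Nat.div_le_div_right (by omega)
    have : (((n-1)/δ : ℕ):ℤ) ≤ (((n+1-1)/δ : ℕ):ℤ) := by exact_mod_cast this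
    nlinarith [this]
  · intro n hn
    rw [key n hn, key (n+1) (by omega)]
    have : (n-1)/δ ≤ (n+1-1)/δ := Nat.div_le_div_right (by omega)
    have : (((n-1)/δ : ℕ):ℤ) ≤ (((n+1-1)/δ : ℕ):ℤ) := by exact_mod_cast this
    nlinarith [this]
end

section
/- Fix n₀ ≥ 3 and B ≥ 1. Let f be an integer sequence and q = Q(f). Suppose 1 ≤ q(n) ≤ B for all 1 ≤ n ≤ n₀ and f(n) ≤ −1 for all n > n₀. Then for every n > n₀, as long as the initial segment (q(1),…,q(n−1)) belongs to 𝓠_{n−1}, the value q(n) is well-defined and satisfies q(n) ≤ B − 1. -/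
/-- Fix `n₀ ≥ 3` and `1 ≤ B ≤ n₀`.  If `1 ≤ q(n) ≤ B` for
`1 ≤ n ≤ n₀` and `f(n) ≤ -1` for `n > n₀`, then for every `n > n₀`, as long as
`(q(1),…,q(n-1)) ∈ 𝓠_{n-1}`, we have `q(n) ≤ B - 1`. -/
theorem stmt_7 (n₀ : ℕ) (hn₀ : 3 ≤ n₀) (B : ℤ) (hB1 : 1 ≤ B) (hB2 : B ≤ (n₀ : ℤ))
    (f : ℕ → ℤ)
    (hq : ∀ n : ℕ, 1 ≤ n → n ≤ n₀ → 1 ≤ Qseq f n ∧ Qseq f n ≤ B)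
    (hf : ∀ n : ℕ, n₀ < n → f n ≤ -1) :
    ∀ n : ℕ, n₀ < n → memQn (n - 1) (Qseq f) → Qseq f n ≤ B - 1 := by
  intro n
  induction n using Nat.strong_induction_on with
  | _ n ih =>
    intro hn hmem
    obtain ⟨k, rfl⟩ : ∃ k, n = k + 2 := ⟨n - 2, by omega⟩
    have hk1 : 1 ≤ Qseq f (k + 1) ∧ Qseq f (k + 1) ≤ ((k : ℤ) + 1) := by
      have := hmem (k + 1) (by omega) (by omega)
      exact ⟨this.1, by exact_mod_cast this.2⟩
    set m := (((k : ℤ) + 2 - Qseq f (k + 1)).toNat) with hm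
    have hm1 : 1 ≤ m ∧ m ≤ k + 1 := by
      constructor <;> omega
    have hmin : min m (k + 1) = m := by omega
    have hfk : f (k + 2) ≤ -1 := hf (k + 2) (by omega)
    have hQ : Qseq f (k + 2) = Qseq f m + f (k + 2) := by
      rw [Qseq, hmin]
    have hqm : Qseq f m ≤ B := by
      by_cases hc : m ≤ n₀
      · exact (hq m hm1.1 hc).2
      · have hmem' : memQn (m - 1) (Qseq f) := by
          intro i hi1 hi2
          exact hmem i hi1 (by omega)
        have := ih m (by omega) (by omega) hmem'
        linarith
    rw [hQ]; linarith
end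

section
/- Fix n₀ ≥ 3 and let f̃ ∈ 𝓕_{n₀} with q̃ = Q(f̃) and B = max_{1 ≤ n ≤ n₀} q̃(n). Let f be any extension of f̃ (i.e., f(n) = f̃(n) for 1 ≤ n ≤ n₀) with f(n) ≤ −1 for all n > n₀, and let q = Q(f). Then: (i) defining n_k = n₀ + kB − k(k−1)/2 for k = 1,…,B (so n₀ < n₁ < … < n_B and n_k = n_{k−1} + B − (k−1)), for each k ∈ {1,…,B} and each n ≥ n_k, either the initial segment (q(1),…,q(n−1)) is not in 𝓠_{n−1} or q(n) ≤ B − k; and (ii) there is an integer d such that q(d) < 1 (so q dies at d and f ∉ 𝓕), with d ≤ D(n₀, B) := n₀ + B(B+1)/2. -/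
/-- Fix `n₀ ≥ 3`, let `f` restricted to `{1,…,n₀}` be in `𝓕_{n₀}`,
let `B = max_{1 ≤ n ≤ n₀} q(n)`, and let `f(n) ≤ -1` for all `n > n₀`.  Then, with
`n_k = n₀ + kB - k(k-1)/2`, for each `1 ≤ k ≤ B` and every `n ≥ n_k`, either
`(q(1),…,q(n-1)) ∉ 𝓠_{n-1}` or `q(n) ≤ B - k`; and `q` dies at some `d` with
`q(d) < 1` and `d ≤ D(n₀,B) = n₀ + B(B+1)/2`. -/
theorem stmt_8 (n₀ : ℕ) (hn₀ : 3 ≤ n₀) (f : ℕ → ℤ) (hf1 : f 1 = 0)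
    (hq : memQn n₀ (Qseq f))
    (B : ℤ)
    (hBub : ∀ n : ℕ, 1 ≤ n → n ≤ n₀ → Qseq f n ≤ B)
    (hBmem : ∃ n : ℕ, 1 ≤ n ∧ n ≤ n₀ ∧ Qseq f n = B)
    (hfneg : ∀ n : ℕ, n₀ < n → f n ≤ -1) :
    (∀ k : ℤ, 1 ≤ k → k ≤ B → ∀ n : ℕ,
      (n₀ : ℤ) + k * B - k * (k - 1) / 2 ≤ (n : ℤ) →
      ¬ memQn (n - 1) (Qseq f) ∨ Qseq f n ≤ B - k) ∧
    ∃ d : ℕ, 1 ≤ d ∧ (d : ℤ) ≤ (n₀ : ℤ) + B * (B + 1) / 2 ∧ Qseq f d < 1 := by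
  obtain ⟨nB, hnB1, hnB2, hnBeq⟩ := hBmem
  have hqnB := hq nB hnB1 hnB2
  have hB1 : 1 ≤ B := by rw [hnBeq] at hqnB; exact hqnB.1
  have hBn₀ : B ≤ (n₀ : ℤ) := by
    rw [hnBeq] at hqnB
    have h2 : (nB : ℤ) ≤ (n₀ : ℤ) := by exact_mod_cast hnB2
    linarith [hqnB.2]
  obtain ⟨b, rfl⟩ : ∃ b : ℕ, B = (b : ℕ) := ⟨B.toNat, (Int.toNat_of_nonneg (by linarith)).symm⟩
  have hb1 : 1 ≤ b := by exact_mod_cast hB1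
  have hbn₀ : b ≤ n₀ := by exact_mod_cast hBn₀
  -- monotonicity of memQn
  have hmono : ∀ a c : ℕ, a ≤ c → memQn c (Qseq f) → memQn a (Qseq f) := by
    intro a c hac h i h1 h2; exact h i h1 (h2.trans hac)
  -- one-step unfolding when the prefix is good
  have hstep : ∀ n : ℕ, 2 ≤ n → memQn (n-1) (Qseq f) →
      ∃ m : ℕ, 1 ≤ m ∧ m ≤ n - 1 ∧ (m : ℤ) = (n : ℤ) - Qseq f (n-1) ∧
        Qseq f n = Qseq f m + f n := by
    intro n hn hmem
    obtain ⟨hl, hu⟩ := hmem (n-1) (by omega) le_rfl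
    obtain ⟨p, rfl⟩ : ∃ p, n = p + 2 := ⟨n - 2, by omega⟩
    refine ⟨(((p+2:ℕ) : ℤ) - Qseq f (p+2-1)).toNat, by omega, by omega, by omega, ?_⟩
    rw [Qseq]
    have h1 : min ((((p:ℤ) + 2 - Qseq f (p + 1))).toNat) (p+1)
        = ((((p+2:ℕ) : ℤ) - Qseq f (p+2-1)).toNat) := by
      have h2 : (p + 2 - 1 : ℕ) = p + 1 := by omega
      rw [h2] at hl hu ⊢
      omega
    rw [h1]
  -- while the prefix is good, q is bounded by B
  have bddB : ∀ n : ℕ, 1 ≤ n → memQn (n-1) (Qseq f) → Qseq f n ≤ (b : ℤ) := by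
    intro n
    induction n using Nat.strong_induction_on with
    | _ n ih =>
      intro hn hmem
      by_cases hle : n ≤ n₀
      · exact hBub n hn hle
      · obtain ⟨m, hm1, hm2, hmc, heq⟩ := hstep n (by omega) hmem
        have hqm := ih m (by omega) hm1 (hmono _ _ (by omega) hmem)
        have hf := hfneg n (by omega)
        rw [heq]; linarith
  -- key descent lemma
  have key : ∀ j : ℕ, 1 ≤ j → j ≤ b → ∀ n : ℕ,
      2*(n₀:ℤ) + 2*(j:ℤ)*(b:ℤ) - (j:ℤ)*((j:ℤ)-1) ≤ 2*(n:ℤ) →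
      memQn (n-1) (Qseq f) → Qseq f n ≤ (b:ℤ) - (j:ℤ) := by
    intro j
    induction j with
    | zero => omega
    | succ j ihj =>
      intro _ hjb n hn hmem
      have hjb' : (j:ℤ) + 1 ≤ (b:ℤ) := by exact_mod_cast hjb
      push_cast at hn
      by_cases hj0 : j = 0
      · subst hj0
        norm_num at hn ⊢
        have hngt : (n₀:ℤ) < (n:ℤ) := by linarith
        have hn2 : 2 ≤ n := by
          have : n₀ < n := by exact_mod_cast hngt
          omega
        obtain ⟨m, hm1, hm2, hmc, heq⟩ := hstep n hn2 hmem
        have hqm := bddB m hm1 (hmono _ _ (by omega) hmem)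
        have hf := hfneg n (by exact_mod_cast hngt)
        rw [heq]; linarith
      · have hj1 : 1 ≤ j := by omega
        have hjZ : (1:ℤ) ≤ (j:ℤ) := by exact_mod_cast hj1
        have hngt : (n₀:ℤ) + 1 ≤ (n:ℤ) := by nlinarith
        have hn2 : 2 ≤ n := by
          have : (n₀:ℕ) < n := by exact_mod_cast hngt
          omega
        obtain ⟨m, hm1, hm2, hmc, heq⟩ := hstep n hn2 hmem
        have hprev1 : 1 ≤ Qseq f (n-1) := (hmem (n-1) (by omega) le_rfl).1
        have hprev : Qseq f (n-1) ≤ (b:ℤ) - (j:ℤ) := by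
          apply ihj hj1 (by omega) (n-1) ?_ (hmono _ _ (by omega) hmem)
          have hc : ((n-1:ℕ):ℤ) = (n:ℤ) - 1 := by omega
          rw [hc]; nlinarith
        have hqm : Qseq f m ≤ (b:ℤ) - (j:ℤ) := by
          apply ihj hj1 (by omega) m ?_ (hmono _ _ (by omega) hmem)
          nlinarith
        have hf := hfneg n (by
          have : (n₀:ℤ) < (n:ℤ) := by linarith
          exact_mod_cast this)
        rw [heq]; push_cast; linarith
  constructor
  · -- part (i)
    intro k hk1 hkB n hn
    by_cases hmem : memQn (n-1) (Qseq f)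
    · right
      obtain ⟨j, rfl⟩ : ∃ j : ℕ, k = (j : ℤ) := ⟨k.toNat, (Int.toNat_of_nonneg (by linarith)).symm⟩
      have hj1 : 1 ≤ j := by exact_mod_cast hk1
      have hjb : j ≤ b := by exact_mod_cast hkB
      apply key j hj1 hjb n ?_ hmem
      obtain ⟨c, hc⟩ : Even ((j:ℤ) * ((j:ℤ) - 1)) := by
        have := Int.even_mul_succ_self ((j:ℤ) - 1)
        simpa [mul_comm] using this
      have hc2 : (j:ℤ) * ((j:ℤ) - 1) = 2 * c := by linarith
      rw [hc2] at hn
      rw [Int.mul_ediv_cancel_left c two_ne_zero] at hn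
      linarith
    · exact Or.inl hmem
  · -- part (ii)
    obtain ⟨c, hc⟩ : Even (b * (b+1)) := Nat.even_mul_succ_self b
    have hc2 : b * (b + 1) = 2 * c := by omega
    have hcZ : (b:ℤ) * ((b:ℤ) + 1) = 2 * (c:ℤ) := by exact_mod_cast hc2
    have hdivZ : (b:ℤ) * ((b:ℤ) + 1) / 2 = (c:ℤ) := by
      rw [hcZ]; exact Int.mul_ediv_cancel_left _ two_ne_zero
    have hcpos : 1 ≤ c := by nlinarith
    -- growth lemma: as long as q stays ≥ 1 past n₀, the prefix stays good
    have grow : ∀ M : ℕ, n₀ ≤ M → (∀ d : ℕ, n₀ < d → d ≤ M → 1 ≤ Qseq f d) →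
        memQn M (Qseq f) := by
      intro M
      induction M with
      | zero => intro h; omega
      | succ M ihM =>
        intro hM hall
        rcases Nat.lt_or_ge M n₀ with h | h
        · have hMe : M + 1 = n₀ := by omega
          rw [hMe]; exact hq
        · have hmem := ihM h (fun d h1 h2 => hall d h1 (by omega))
          intro i hi1 hi2
          rcases Nat.lt_or_ge i (M+1) with hi | hi
          · exact hmem i hi1 (by omega)
          · have hie : i = M + 1 := by omega
            subst hie
            refine ⟨hall (M+1) (by omega) le_rfl, ?_⟩
            have hub := bddB (M+1) (by omega) (by rwa [Nat.add_sub_cancel])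
            have : (b:ℤ) ≤ (n₀:ℤ) := by exact_mod_cast hbn₀
            have h2 : ((n₀:ℕ):ℤ) ≤ ((M:ℕ):ℤ) := by exact_mod_cast h
            push_cast
            linarith
    by_cases hall : ∀ d : ℕ, n₀ < d → d ≤ n₀ + c → 1 ≤ Qseq f d
    · exfalso
      have hmem := grow (n₀ + c) (by omega) hall
      have h1 := (hmem (n₀ + c) (by omega) le_rfl).1
      have h2 : Qseq f (n₀ + c) ≤ (b:ℤ) - (b:ℤ) := by
        apply key b hb1 le_rfl (n₀ + c) ?_ (hmono _ _ (by omega) hmem)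
        have hNc : ((n₀ + c : ℕ):ℤ) = (n₀:ℤ) + (c:ℤ) := by push_cast; ring
        rw [hNc]
        nlinarith
      omega
    · push_neg at hall
      obtain ⟨d, hd1, hd2, hd3⟩ := hall
      refine ⟨d, by omega, ?_, hd3⟩
      rw [hdivZ]
      omega
end

section
/- Let f be any integer sequence with f(1) = 0 and f(n) ∈ {0, n−1} for every n ≥ 1, and let q = Q(f). Then q(n) = 1 + f(n) ∈ {1, n} for all n ≥ 1; in particular q ∈ 𝓠 and therefore f ∈ 𝓕. -/
/-- If `f(1) = 0` and `f(n) ∈ {0, n-1}` for every `n ≥ 1`, then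
`q = Q(f)` satisfies `q(n) = 1 + f(n) ∈ {1, n}` for all `n ≥ 1`; in particular
`q ∈ 𝓠` and `f ∈ 𝓕`. -/
theorem stmt_9 (f : ℕ → ℤ) (hf1 : f 1 = 0)
    (hf : ∀ n : ℕ, 1 ≤ n → f n = 0 ∨ f n = (n : ℤ) - 1) :
    (∀ n : ℕ, 1 ≤ n → Qseq f n = 1 + f n ∧ (Qseq f n = 1 ∨ Qseq f n = (n : ℤ))) ∧
    memQ (Qseq f) ∧ memF f := by

  have key : ∀ n : ℕ, Qseq f (n + 1) = 1 + f (n + 1) := by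
    intro n
    induction n with
    | zero => simp [Qseq, hf1]
    | succ n ih =>
      show Qseq f (n + 2) = 1 + f (n + 2)
      rw [Qseq]
      rcases hf (n + 1) (by omega) with h | h
      · have hq : Qseq f (n + 1) = 1 := by rw [ih, h]; ring
        rw [hq]
        have : (((n : ℤ) + 2 - 1).toNat) = n + 1 := by omega
        rw [this, min_self, hq]
      · have hq : Qseq f (n + 1) = (n : ℤ) + 1 := by
          rw [ih, h]; push_cast; ring
        rw [hq]
        have h1 : (((n : ℤ) + 2 - ((n : ℤ) + 1)).toNat) = 1 := by omega
        rw [h1]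
        have h2 : min 1 (n + 1) = 1 := by omega
        rw [h2]
        simp [Qseq]
  have main : ∀ n : ℕ, 1 ≤ n → Qseq f n = 1 + f n ∧ (Qseq f n = 1 ∨ Qseq f n = (n : ℤ)) := by
    intro n hn
    obtain ⟨m, rfl⟩ : ∃ m, n = m + 1 := ⟨n - 1, by omega⟩
    refine ⟨key m, ?_⟩
    rcases hf (m + 1) (by omega) with h | h
    · left; rw [key m, h]; ring
    · right; rw [key m, h]; push_cast; ring
  have hQ : memQ (Qseq f) := by
    intro i hi
    rcases (main i hi).2 with h | h <;> rw [h] <;> constructor <;> omega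
  exact ⟨main, hQ, hf1, hQ⟩
end

section
/- Every integer sequence f with f(1) = 0, f(2) ∈ {0, 1}, and f(n) ∈ {0, 1, 2} for all n ≥ 3 belongs to 𝓕, i.e., Q(f) exists. -/
/-- Every integer sequence `f` with `f(1) = 0`, `f(2) ∈ {0,1}` and
`f(n) ∈ {0,1,2}` for all `n ≥ 3` belongs to `𝓕`. -/
theorem stmt_10 (f : ℕ → ℤ) (hf1 : f 1 = 0) (hf2 : f 2 = 0 ∨ f 2 = 1)
    (hf : ∀ n : ℕ, 3 ≤ n → f n = 0 ∨ f n = 1 ∨ f n = 2) :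
    memF f := by
  have key : ∀ n : ℕ, 1 ≤ n → 1 ≤ Qseq f n ∧ Qseq f n ≤ (n : ℤ) := by
    intro n
    induction n using Nat.strong_induction_on with
    | _ n ih =>
      match n with
      | 0 => intro h; omega
      | 1 => intro _; simp [Qseq]
      | (k+2) =>
        intro _
        obtain ⟨h1, h2⟩ := ih (k+1) (by omega) (by omega)
        have hmle : min (((k : ℤ) + 2 - Qseq f (k + 1)).toNat) (k + 1)
            = (((k : ℤ) + 2 - Qseq f (k + 1)).toNat) := by omega
        have heq : Qseq f (k+2)
            = Qseq f (((k : ℤ) + 2 - Qseq f (k + 1)).toNat) + f (k + 2) := by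
          rw [Qseq, hmle]
        set m : ℕ := (((k : ℤ) + 2 - Qseq f (k + 1)).toNat) with hm
        have hm1 : 1 ≤ m := by omega
        have hm2 : m ≤ k + 1 := by omega
        obtain ⟨hq1, hq2⟩ := ih m (by omega) hm1
        have hfb : 0 ≤ f (k+2) ∧ f (k+2) ≤ 2 := by
          rcases Nat.eq_zero_or_pos k with hk | hk
          · subst hk; simp only [Nat.zero_add]; rcases hf2 with h | h <;> omega
          · rcases hf (k+2) (by omega) with h | h | h <;> omega
        constructor
        · rw [heq]; omega
        · rw [heq]
          by_cases hq : Qseq f (k+1) = 1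
          · have : m = k + 1 := by omega
            rw [this, hq]
            rcases Nat.eq_zero_or_pos k with hk | hk
            · subst hk; simp only [Nat.zero_add]; rcases hf2 with h | h <;> simp [h]
            · omega
          · have : m ≤ k := by omega
            have : (m : ℤ) ≤ (k : ℤ) := by exact_mod_cast this
            omega
  exact ⟨hf1, fun i hi => key i hi⟩
end

section
/- Let n₀ ≥ 3 and let f_{n₀} ∈ 𝓕_{n₀} be a finite sequence of n₀ terms. Let the infinite sequence f be any extension of f_{n₀} (i.e., f(n) = f_{n₀}(n) for 1 ≤ n ≤ n₀) with f(n) ∈ {0, 1, 2} for all n > n₀. Then f ∈ 𝓕. -/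
/-- If `n₀ ≥ 3`, the restriction of `f` to `{1,…,n₀}` lies in
`𝓕_{n₀}`, and `f(n) ∈ {0,1,2}` for all `n > n₀`, then `f ∈ 𝓕`. -/
theorem stmt_11 (n₀ : ℕ) (hn₀ : 3 ≤ n₀) (f : ℕ → ℤ)
    (hseg : memFn n₀ f)
    (hext : ∀ n : ℕ, n₀ < n → f n = 0 ∨ f n = 1 ∨ f n = 2) :
    memF f := by
  obtain ⟨hf1, hQn⟩ := hseg
  refine ⟨hf1, ?_⟩
  intro i hi
  induction i using Nat.strong_induction_on with
  | _ i ih =>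
    rcases le_or_gt i n₀ with h | h
    · exact hQn i hi h
    · obtain ⟨k, rfl⟩ : ∃ k, i = k + 2 := ⟨i - 2, by omega⟩
      have ihp := ih (k + 1) (by omega) (by omega)
      have hq1lb := ihp.1
      have hq1ub := ihp.2
      have hcast : ((k : ℤ) + 1) = ((k + 1 : ℕ) : ℤ) := by push_cast; ring
      set q1 := Qseq f (k + 1) with hq1
      have hm : min (((k : ℤ) + 2 - q1).toNat) (k + 1) = ((k : ℤ) + 2 - q1).toNat := by
        omega
      set m := ((k : ℤ) + 2 - q1).toNat with hmdef
      have hm1 : 1 ≤ m := by omega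
      have hm2 : m ≤ k + 1 := by omega
      have ihm := ih m (by omega) hm1
      have hfval := hext (k + 2) (by omega)
      have hq : Qseq f (k + 2) = Qseq f m + f (k + 2) := by
        rw [Qseq, hm]
      rcases eq_or_lt_of_le hq1lb with hone | htwo
      · -- q(k+1) = 1, so m = k+1 and Qseq f m = 1
        have hmk : m = k + 1 := by omega
        rw [hq, hmk, ← hq1, ← hone]
        constructor <;> omega
      · -- q(k+1) ≥ 2
        have hmle : (m : ℤ) ≤ (k : ℤ) := by omega
        rw [hq]
        have := ihm.1
        have := ihm.2
        constructor <;> omega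
end

section
/- Fix an integer ℓ ≥ 3 and let q be any integer sequence with q(1) = 1, q(n) = 2 for 2 ≤ n ≤ ℓ + 1, and, for each k ≥ 2, q(ℓ + k) chosen arbitrarily from {k, k+1, …, ℓ + k − 1}. Then q ∈ 𝓠; moreover the nested sequence q' = Q'(q) satisfies q'(1) = q'(2) = q'(3) = 1 and q'(n) = 2 for all n ≥ 4, so that f = F(q) ∈ 𝓕 with f(1) = 0, f(2) = f(3) = 1, f(n) = 0 for 4 ≤ n ≤ ℓ + 1, and f(n) = q(n) − 2 for n ≥ ℓ + 2. -/
/-- Fix `ℓ ≥ 3` and let `q(1) = 1`, `q(n) = 2` for `2 ≤ n ≤ ℓ+1`,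
and `q(ℓ+k) ∈ {k, …, ℓ+k-1}` for `k ≥ 2`.  Then `q ∈ 𝓠`; moreover
`q'(1) = q'(2) = q'(3) = 1` and `q'(n) = 2` for all `n ≥ 4`, so that
`f = F(q) ∈ 𝓕` with `f(1) = 0`, `f(2) = f(3) = 1`, `f(n) = 0` for
`4 ≤ n ≤ ℓ+1`, and `f(n) = q(n) - 2` for `n ≥ ℓ+2`. -/
theorem stmt_12 (l : ℕ) (hl : 3 ≤ l) (q : ℕ → ℤ)
    (h1 : q 1 = 1)
    (h2 : ∀ n : ℕ, 2 ≤ n → n ≤ l + 1 → q n = 2)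
    (h3 : ∀ k : ℕ, 2 ≤ k → (k : ℤ) ≤ q (l + k) ∧ q (l + k) ≤ (l : ℤ) + k - 1) :
    memQ q ∧
    Q'seq q 1 = 1 ∧ Q'seq q 2 = 1 ∧ Q'seq q 3 = 1 ∧
    (∀ n : ℕ, 4 ≤ n → Q'seq q n = 2) ∧
    Fseq q 1 = 0 ∧ Fseq q 2 = 1 ∧ Fseq q 3 = 1 ∧
    (∀ n : ℕ, 4 ≤ n → n ≤ l + 1 → Fseq q n = 0) ∧
    (∀ n : ℕ, l + 2 ≤ n → Fseq q n = q n - 2) ∧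
    memF (Fseq q) := by

  -- q ∈ 𝓠
  have hq : memQ q := by
    intro i hi
    rcases Nat.lt_or_ge i 2 with h | h
    · interval_cases i
      simp [h1]
    rcases le_or_gt i (l + 1) with h' | h'
    · have := h2 i h h'
      constructor <;> omega
    · obtain ⟨k, rfl⟩ : ∃ k, i = l + k := ⟨i - l, by omega⟩
      have hk : 2 ≤ k := by omega
      have := h3 k hk
      push_cast
      constructor <;> omega
  -- q' values
  have hQ'2 : Q'seq q 2 = 1 := by
    have : (((2:ℕ):ℤ) - q (2 - 1)).toNat = 1 := by rw [show (2:ℕ)-1 = 1 from rfl, h1]; rfl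
    simp only [Q'seq]
    rw [if_neg (by norm_num), this, h1]
  have hQ'3 : Q'seq q 3 = 1 := by
    have hq2 : q 2 = 2 := h2 2 le_rfl (by omega)
    have : (((3:ℕ):ℤ) - q (3 - 1)).toNat = 1 := by rw [show (3:ℕ)-1 = 2 from rfl, hq2]; rfl
    simp only [Q'seq]
    rw [if_neg (by norm_num), this, h1]
  have hQ'big : ∀ n : ℕ, 4 ≤ n → Q'seq q n = 2 := by
    intro n hn
    have hne : ¬ n ≤ 1 := by omega
    simp only [Q'seq, if_neg hne]
    set j := (((n:ℕ):ℤ) - q (n - 1)).toNat with hj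
    rcases le_or_gt n (l + 2) with h' | h'
    · have hq1 : q (n - 1) = 2 := h2 (n - 1) (by omega) (by omega)
      have hjv : j = n - 2 := by
        rw [hj, hq1]; omega
      rw [hjv]
      exact h2 (n - 2) (by omega) (by omega)
    · obtain ⟨k, hk2, hkeq⟩ : ∃ k, 2 ≤ k ∧ n - 1 = l + k := ⟨n - 1 - l, by omega, by omega⟩
      have hb := h3 k hk2
      rw [hkeq] at hj
      have hn' : (n : ℤ) = (l : ℤ) + k + 1 := by omega
      have hjb : 2 ≤ j ∧ j ≤ l + 1 := by
        constructor <;> omega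
      exact h2 j hjb.1 hjb.2
  -- relation Fseq = q n - Q'seq
  have hFQ : ∀ n : ℕ, Fseq q n = q n - Q'seq q n ∨ n ≤ 1 := by
    intro n
    rcases le_or_gt n 1 with h | h
    · right; exact h
    · left; simp [Fseq, Q'seq, Nat.not_le.mpr h, not_le_of_gt h]
  have hF : ∀ n : ℕ, 2 ≤ n → Fseq q n = q n - Q'seq q n := by
    intro n hn
    rcases hFQ n with h | h
    · exact h
    · omega
  have hq2 : q 2 = 2 := h2 2 le_rfl (by omega)
  have hq3 : q 3 = 2 := h2 3 (by omega) (by omega)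
  have hF2 : Fseq q 2 = 1 := by rw [hF 2 le_rfl, hQ'2, hq2]; ring
  have hF3 : Fseq q 3 = 1 := by rw [hF 3 (by omega), hQ'3, hq3]; ring
  have hFmid : ∀ n : ℕ, 4 ≤ n → n ≤ l + 1 → Fseq q n = 0 := by
    intro n hn hn'
    rw [hF n (by omega), hQ'big n hn, h2 n (by omega) hn']; ring
  have hFbig : ∀ n : ℕ, l + 2 ≤ n → Fseq q n = q n - 2 := by
    intro n hn
    rw [hF n (by omega), hQ'big n (by omega)]
  -- Qseq (Fseq q) = q
  have key : ∀ n : ℕ, 1 ≤ n → Qseq (Fseq q) n = q n := by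
    intro n
    induction n using Nat.strong_induction_on with
    | _ n ih =>
      intro hn
      match n, hn with
      | 1, _ => rw [Qseq, h1]
      | (m+2), _ =>
        have hqm := hq (m + 1) (by omega)
        have ihm : Qseq (Fseq q) (m + 1) = q (m + 1) := ih (m + 1) (by omega) (by omega)
        rw [Qseq, ihm]
        have hmin : min (((m : ℤ) + 2 - q (m + 1)).toNat) (m + 1)
            = ((m : ℤ) + 2 - q (m + 1)).toNat := by omega
        rw [hmin]
        have hjb : 1 ≤ ((m : ℤ) + 2 - q (m + 1)).toNat ∧
            ((m : ℤ) + 2 - q (m + 1)).toNat ≤ m + 1 := by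
          constructor <;> omega
        have iht := ih _ (by omega : ((m : ℤ) + 2 - q (m + 1)).toNat < m + 2) hjb.1
        rw [iht]
        have hFv : Fseq q (m + 2) = q (m + 2) - q ((((m+2 : ℕ) : ℤ) - q (m + 2 - 1)).toNat) := by
          simp [Fseq, show ¬ (m + 2 ≤ 1) by omega]
        rw [hFv]
        have : (((m+2 : ℕ) : ℤ) - q (m + 2 - 1)).toNat = ((m : ℤ) + 2 - q (m + 1)).toNat := by
          rw [show m + 2 - 1 = m + 1 from rfl]; push_cast; ring_nf
        rw [this]; ring
  have hmemQF : memQ (Qseq (Fseq q)) := by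
    intro i hi
    rw [key i hi]
    exact hq i hi
  refine ⟨hq, by simp [Q'seq], hQ'2, hQ'3, hQ'big, by simp [Fseq], hF2, hF3, hFmid, hFbig,
    ⟨by simp [Fseq], hmemQF⟩⟩
end

section
/- Let y be any sequence with y(1) = 1 and y(n) ∈ {0, 1} for n > 1, and for each n define the set s(n) as follows: s(n) = {1} if y(n) = 1, while s(n) = {1} ∪ { n + 1 − j : 1 ≤ j ≤ n and y(j) = 1 } if y(n) = 0. Let q be any sequence formed by choosing q(n) ∈ s(n) independently for each n. Then q ∈ 𝓠, and the nested sequence q'(n) := q(n − q(n−1)) (with q'(1) := 1) satisfies q'(n) = 1 for all n ≥ 1. Consequently f = F(q), which is given by f(n) = q(n) − 1, belongs to 𝓕. -/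
/-- Let `y(1) = 1`, `y(n) ∈ {0,1}` for `n > 1`, and let `q` be any
sequence with `q(n) ∈ s(n)`, where `s(n) = {1}` if `y(n) = 1` and
`s(n) = {1} ∪ {n + 1 - j : 1 ≤ j ≤ n, y(j) = 1}` if `y(n) = 0`.  Then `q ∈ 𝓠`, the
nested sequence satisfies `q'(n) = 1` for all `n ≥ 1`, and `f = F(q)`, given by
`f(n) = q(n) - 1`, belongs to `𝓕`. -/
theorem stmt_13 (y : ℕ → ℤ) (hy1 : y 1 = 1) (hy : ∀ n : ℕ, 1 < n → y n = 0 ∨ y n = 1)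
    (q : ℕ → ℤ)
    (hq : ∀ n : ℕ, 1 ≤ n →
      q n = 1 ∨ (y n = 0 ∧ ∃ j : ℕ, 1 ≤ j ∧ j ≤ n ∧ y j = 1 ∧ q n = (n : ℤ) + 1 - j)) :
    memQ q ∧
    (∀ n : ℕ, 1 ≤ n → Q'seq q n = 1) ∧
    (∀ n : ℕ, 1 ≤ n → Fseq q n = q n - 1) ∧
    memF (Fseq q) := by
  have hq1 : q 1 = 1 := by
    rcases hq 1 le_rfl with h | ⟨h0, _⟩
    · exact h
    · rw [hy1] at h0; norm_num at h0
  have hone : ∀ j : ℕ, 1 ≤ j → y j = 1 → q j = 1 := by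
    intro j hj hyj
    rcases hq j hj with h | ⟨h0, _⟩
    · exact h
    · rw [hyj] at h0; norm_num at h0
  have hQ : memQ q := by
    intro i hi
    rcases hq i hi with h | ⟨_, j, hj1, hjn, _, hqe⟩ <;> omega
  have hnest : ∀ n : ℕ, 2 ≤ n → q (((n : ℤ) - q (n - 1)).toNat) = 1 := by
    intro n hn
    have hm1 : 1 ≤ n - 1 := by omega
    rcases hq (n - 1) hm1 with h | ⟨_, j, hj1, hjn, hyj, hqe⟩
    · have e : ((n : ℤ) - q (n - 1)).toNat = n - 1 := by rw [h]; omega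
      rw [e, h]
    · have e : ((n : ℤ) - q (n - 1)).toNat = j := by rw [hqe]; omega
      rw [e]; exact hone j hj1 hyj
  have hmain : ∀ i : ℕ, 1 ≤ i → Qseq (Fseq q) i = q i := by
    intro i
    induction i using Nat.strong_induction_on with
    | _ i ih =>
      match i with
      | 0 => omega
      | 1 => intro _; simp [Qseq, hq1]
      | n + 2 =>
        intro _
        have h1 : Qseq (Fseq q) (n + 1) = q (n + 1) := ih (n + 1) (by omega) (by omega)
        rw [Qseq, h1]
        have hb := hQ (n + 1) (by omega)
        have hm1 : 1 ≤ ((n : ℤ) + 2 - q (n + 1)).toNat ∧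
            ((n : ℤ) + 2 - q (n + 1)).toNat ≤ n + 1 := by omega
        have hmin : min (((n : ℤ) + 2 - q (n + 1)).toNat) (n + 1)
            = ((n : ℤ) + 2 - q (n + 1)).toNat := by omega
        rw [hmin]
        have h2 : Qseq (Fseq q) (((n : ℤ) + 2 - q (n + 1)).toNat)
            = q (((n : ℤ) + 2 - q (n + 1)).toNat) := ih _ (by omega) (by omega)
        rw [h2]
        have hf : Fseq q (n + 2) = q (n + 2) - q (((n : ℤ) + 2 - q (n + 1)).toNat) := by
          unfold Fseq
          have : ¬ (n + 2 ≤ 1) := by omega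
          rw [if_neg this]
          have e : (((n + 2 : ℕ) : ℤ) - q (n + 2 - 1)).toNat
              = ((n : ℤ) + 2 - q (n + 1)).toNat := by
            have : n + 2 - 1 = n + 1 := by omega
            rw [this]; push_cast; ring_nf
          rw [e]
        rw [hf]; ring
  refine ⟨hQ, ?_, ?_, ?_⟩
  · intro n hn
    unfold Q'seq
    by_cases h : n ≤ 1
    · rw [if_pos h]
    · rw [if_neg h]; exact hnest n (by omega)
  · intro n hn
    unfold Fseq
    by_cases h : n ≤ 1
    · rw [if_pos h]
      have : n = 1 := by omega
      rw [this, hq1]; ring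
    · rw [if_neg h, hnest n (by omega)]
  · refine ⟨by simp [Fseq], ?_⟩
    intro i hi
    rw [hmain i hi]
    exact hQ i hi
end

section
/- For every b ∈ (0, 1) there exists an integer sequence f with 0 ≤ f(n) ≤ ⌊bn⌋ for all n ≥ 1 (i.e., f in the linear cone 𝓒(0, b)) such that f ∉ 𝓕; that is, the sequence q = Q(f) dies at some finite index K with q(K) > K. -/
def auxF (N m k : ℕ) : ℕ → ℤ := fun n =>
  if n < N ∨ N + 2*k < n then 0
  else if (n - N) % 2 = 0 then (m : ℤ) else 1

def auxQ (N m : ℕ) : ℕ → ℤ := fun n =>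
  if n = 0 then 0
  else if n < N then 1
  else if (n - N) % 2 = 0 then 1 + (((n - N)/2 : ℕ) + 1) * (m : ℤ) else 2

lemma aux_main (N m k : ℕ) (hN : 2 ≤ N) (hm : 3 ≤ m)
    (hmin : ∀ j, j < k → 1 + (j+1)*m ≤ N + 2*j) :
    ∀ n, 1 ≤ n → n ≤ N + 2*k → Qseq (auxF N m k) n = auxQ N m n := by
  intro n
  induction n using Nat.strong_induction_on with
  | _ n ih =>
    intro hn1 hn2
    match n, hn1 with
    | 1, _ =>
      simp only [Qseq, auxQ]
      rw [if_neg (by omega), if_pos (by omega)]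
    | (i+2), _ =>
      rw [Qseq]
      rcases lt_or_ge (i+2) N with hlt | hge
      · -- below N : everything is 1
        have h1 : Qseq (auxF N m k) (i+1) = 1 := by
          rw [ih (i+1) (by omega) (by omega) (by omega), auxQ]
          rw [if_neg (by omega), if_pos (by omega)]
        rw [h1]
        have : min (((i : ℤ) + 2 - 1).toNat) (i+1) = i + 1 := by omega
        rw [this, h1, auxQ, auxF]
        rw [if_pos (by omega), if_neg (by omega), if_pos (by omega)]
        ring
      · rcases eq_or_lt_of_le hge with heq | hgt
        · -- i + 2 = N
          have h1 : Qseq (auxF N m k) (i+1) = 1 := by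
            rw [ih (i+1) (by omega) (by omega) (by omega), auxQ]
            rw [if_neg (by omega), if_pos (by omega)]
          rw [h1]
          have : min (((i : ℤ) + 2 - 1).toNat) (i+1) = i + 1 := by omega
          rw [this, h1, auxF, auxQ]
          rw [if_neg (by omega), if_pos (by omega), if_neg (by omega),
            if_neg (by omega), if_pos (by omega)]
          have h2 : (i + 2 - N) / 2 = 0 := by omega
          rw [h2]; ring
        · -- i + 2 > N
          rcases Nat.even_or_odd (i + 2 - N) with ⟨j, hj⟩ | ⟨j, hj⟩
          · -- i + 2 = N + 2j, j ≥ 1 : the climbing step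
            have hj1 : 1 ≤ j := by omega
            -- q(i+1) = 2 (odd index)
            have h1 : Qseq (auxF N m k) (i+1) = 2 := by
              rw [ih (i+1) (by omega) (by omega) (by omega), auxQ]
              rw [if_neg (by omega), if_neg (by omega), if_neg (by omega)]
            rw [h1]
            have hmin' : min (((i : ℤ) + 2 - 2).toNat) (i+1) = i := by omega
            rw [hmin']
            have h2 : Qseq (auxF N m k) i = 1 + ((j - 1 : ℕ) + 1) * (m : ℤ) := by
              rw [ih i (by omega) (by omega) (by omega), auxQ]
              rw [if_neg (by omega), if_neg (by omega), if_pos (by omega)]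
              have : (i - N) / 2 = j - 1 := by omega
              rw [this]
            rw [h2, auxF, auxQ]
            rw [if_neg (by omega), if_pos (by omega), if_neg (by omega),
              if_neg (by omega), if_pos (by omega)]
            have h3 : (i + 2 - N) / 2 = j := by omega
            rw [h3]
            have h4 : ((j - 1 : ℕ) : ℤ) = (j : ℤ) - 1 := by omega
            rw [h4]; ring
          · -- i + 2 = N + 2j + 1 : the pointer step, lands in the flat region
            have hjk : j < k := by omega
            set c := (j+1)*m with hcdef
            have hb1 : 1 + c ≤ N + 2*j := hmin j hjk
            have hb2 : 3*(j+1) ≤ c := by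
              rw [hcdef]
              calc 3*(j+1) = (j+1)*3 := by ring
              _ ≤ (j+1)*m := Nat.mul_le_mul_left (j+1) hm
            have h1 : Qseq (auxF N m k) (i+1) = 1 + (c : ℤ) := by
              rw [ih (i+1) (by omega) (by omega) (by omega), auxQ]
              rw [if_neg (by omega), if_neg (by omega), if_pos (by omega)]
              have h2 : (i + 1 - N) / 2 = j := by omega
              rw [h2, hcdef]; push_cast; ring
            rw [h1]
            have hmin' : min (((i : ℤ) + 2 - (1 + (c : ℤ))).toNat) (i+1)
                = i + 1 - c := by omega
            rw [hmin']
            have h2 : Qseq (auxF N m k) (i + 1 - c) = 1 := by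
              rw [ih _ (by omega) (by omega) (by omega), auxQ]
              rw [if_neg (by omega), if_pos (by omega)]
            rw [h2, auxF, auxQ]
            rw [if_neg (by omega), if_neg (by omega), if_neg (by omega),
              if_neg (by omega), if_neg (by omega)]
            ring


/-- For every `b ∈ (0,1)` there is a sequence `f` in the linear cone
`𝓒(0,b)` (i.e. `0 ≤ f(n) ≤ ⌊bn⌋` for all `n ≥ 1`) with `f ∉ 𝓕`: the sequence
`q = Q(f)` dies at some finite index `K` with `q(K) > K`. -/
theorem stmt_14 (b : ℝ) (hb0 : 0 < b) (hb1 : b < 1) :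
    ∃ f : ℕ → ℤ, f 1 = 0 ∧
      (∀ n : ℕ, 1 ≤ n → 0 ≤ f n ∧ f n ≤ ⌊b * (n : ℝ)⌋) ∧
      ¬ memF f ∧
      ∃ K : ℕ, 1 ≤ K ∧
        (∀ i : ℕ, 1 ≤ i → i < K → 1 ≤ Qseq f i ∧ Qseq f i ≤ (i : ℤ)) ∧
        (K : ℤ) < Qseq f K := by
  obtain ⟨N, hN3⟩ := exists_nat_ge (3 / b)
  have hbN : (3:ℝ) ≤ b * N := by
    have h := mul_le_mul_of_nonneg_right hN3 hb0.le
    rw [div_mul_cancel₀ _ hb0.ne'] at h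
    linarith
  set m := (⌊b * (N:ℝ)⌋).toNat with hmdef
  have hfloor3 : (3:ℤ) ≤ ⌊b * (N:ℝ)⌋ := by
    rw [Int.le_floor]; exact_mod_cast hbN
  have hmz : (m:ℤ) = ⌊b * (N:ℝ)⌋ := Int.toNat_of_nonneg (by omega)
  have hm : 3 ≤ m := by omega
  have hN2 : 2 ≤ N := by
    have h3 : (3:ℝ) < N := by nlinarith
    have : (3:ℕ) < N := by exact_mod_cast h3
    omega
  have hex : ∃ k, N + 2*k < 1 + (k+1)*m := by
    refine ⟨N, ?_⟩
    have : (N+1)*3 ≤ (N+1)*m := Nat.mul_le_mul_left _ hm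
    omega
  set k := Nat.find hex with hkdef
  have hspec : N + 2*k < 1 + (k+1)*m := Nat.find_spec hex
  have hmin : ∀ j, j < k → 1 + (j+1)*m ≤ N + 2*j := fun j hj =>
    le_of_not_gt (Nat.find_min hex hj)
  have hmain := aux_main N m k hN2 hm hmin
  -- value of q at K
  have hqK : Qseq (auxF N m k) (N + 2*k) = 1 + ((k:ℤ) + 1) * (m:ℤ) := by
    rw [hmain (N+2*k) (by omega) le_rfl, auxQ]
    rw [if_neg (by omega), if_neg (by omega), if_pos (by omega)]
    have h2 : (N + 2*k - N)/2 = k := by omega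
    rw [h2]
  have hdeath : ((N + 2*k : ℕ) : ℤ) < Qseq (auxF N m k) (N + 2*k) := by
    rw [hqK]
    have : ((N + 2*k : ℕ) : ℤ) < ((1 + (k+1)*m : ℕ) : ℤ) := by exact_mod_cast hspec
    push_cast at this ⊢
    linarith
  have hbounds : ∀ i : ℕ, 1 ≤ i → i < N + 2*k →
      1 ≤ Qseq (auxF N m k) i ∧ Qseq (auxF N m k) i ≤ (i:ℤ) := by
    intro i h1 h2
    rw [hmain i h1 (by omega), auxQ]
    split_ifs with c1 c2 c3
    · omega
    · constructor
      · norm_num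
      · exact_mod_cast h1
    · -- even index ≥ N
      have hjk : (i - N)/2 < k := by omega
      have hb := hmin _ hjk
      have hie : i = N + 2*((i-N)/2) := by omega
      constructor
      · have : (0:ℤ) ≤ (((i-N)/2 : ℕ) + 1) * (m:ℤ) := by positivity
        linarith
      · have : ((1 + ((i-N)/2 + 1)*m : ℕ) : ℤ) ≤ ((i:ℕ):ℤ) := by exact_mod_cast (by omega : 1 + ((i-N)/2+1)*m ≤ i)
        push_cast at this ⊢
        linarith
    · constructor
      · norm_num
      · have : 3 ≤ i := by omega
        exact_mod_cast (by omega : (2:ℕ) ≤ i)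
  refine ⟨auxF N m k, ?_, ?_, ?_, N + 2*k, by omega, hbounds, hdeath⟩
  · rw [auxF, if_pos (by omega)]
  · intro n hn
    rw [auxF]
    split_ifs with h1 h2
    · exact ⟨le_rfl, Int.floor_nonneg.mpr (by positivity)⟩
    · push_neg at h1
      have hmono : ⌊b * (N:ℝ)⌋ ≤ ⌊b * (n:ℝ)⌋ := by
        apply Int.floor_le_floor
        have : (N:ℝ) ≤ (n:ℝ) := by exact_mod_cast h1.1
        nlinarith
      exact ⟨by positivity, by omega⟩
    · push_neg at h1
      have hmono : ⌊b * (N:ℝ)⌋ ≤ ⌊b * (n:ℝ)⌋ := by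
        apply Int.floor_le_floor
        have : (N:ℝ) ≤ (n:ℝ) := by exact_mod_cast h1.1
        nlinarith
      exact ⟨by norm_num, by omega⟩
  · rintro ⟨-, hq⟩
    have := (hq (N + 2*k) (by omega)).2
    omega
end

section
/- For every b ∈ (0, 1) there exists a* ∈ (0, b) such that for every a ∈ (0, a*] there is an integer sequence f with ⌊an⌋ ≤ f(n) ≤ ⌊bn⌋ for all n ≥ 1 (i.e., f in the linear cone 𝓒(a, b)) which is not in 𝓕. -/
noncomputable def nseq (b : ℝ) : ℕ → ℕ
  | 0 => ⌈(7:ℝ)/b⌉₊ + 3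
  | k+1 => ⌊((nseq b k : ℝ) - 3)/(1-b)⌋₊

noncomputable def vseq (b : ℝ) : ℕ → ℤ
  | 0 => 1
  | k+1 => vseq b k + ⌊b * (nseq b (k+1) : ℝ)⌋

open Classical in
noncomputable def gfun (b : ℝ) (K : ℕ) : ℕ → ℤ := fun m =>
  if m = 0 then 0
  else if h : ∃ k, 1 ≤ k ∧ k ≤ K ∧ m = nseq b k then vseq b h.choose
  else if h : ∃ k, 1 ≤ k ∧ k ≤ K ∧ m = nseq b k - 1 then
    (nseq b h.choose : ℤ) - (nseq b (h.choose - 1) : ℤ)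
  else 1

noncomputable def ffun (b : ℝ) (K : ℕ) : ℕ → ℤ := fun m =>
  if 2 ≤ m ∧ m ≤ nseq b K then
    gfun b K m - gfun b K (((m : ℤ) - gfun b K (m-1)).toNat)
  else if m ≤ 1 then 0 else ⌊b * (m:ℝ)⌋

section
variable {b : ℝ} (hb0 : 0 < b) (hb1 : b < 1)

include hb0 hb1 in
lemma nseq_facts : ∀ k : ℕ, (7:ℝ)/b ≤ nseq b k ∧ nseq b k + 3 ≤ nseq b (k+1) ∧
    (1-b) * (nseq b (k+1) : ℝ) ≤ (nseq b k : ℝ) - 3 := by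
  have ht : (0:ℝ) < 1 - b := by linarith
  have h7b : (7:ℝ) < 7/b := by
    rw [lt_div_iff₀ hb0]; nlinarith
  have key : ∀ m : ℕ, (7:ℝ)/b ≤ m →
      m + 3 ≤ ⌊((m : ℝ) - 3)/(1-b)⌋₊ ∧ (1-b) * (⌊((m : ℝ) - 3)/(1-b)⌋₊ : ℝ) ≤ (m : ℝ) - 3 := by
    intro m hm
    have h7 : (7:ℝ) ≤ (m:ℝ) := le_trans (le_of_lt h7b) hm
    have hbm : (7:ℝ) ≤ b * m := by
      rw [div_le_iff₀ hb0] at hm; linarith [hm]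
    have hx0 : (0:ℝ) ≤ ((m : ℝ) - 3)/(1-b) := div_nonneg (by linarith) (le_of_lt ht)
    have hfl : (⌊((m : ℝ) - 3)/(1-b)⌋₊ : ℝ) ≤ ((m : ℝ) - 3)/(1-b) := Nat.floor_le hx0
    have hfl2 : ((m : ℝ) - 3)/(1-b) < ⌊((m : ℝ) - 3)/(1-b)⌋₊ + 1 := Nat.lt_floor_add_one _
    constructor
    · by_contra hcon
      push_neg at hcon
      have hn : ⌊((m : ℝ) - 3)/(1-b)⌋₊ ≤ m + 2 := by omega
      have hc : (⌊((m : ℝ) - 3)/(1-b)⌋₊ : ℝ) ≤ (m:ℝ) + 2 := by exact_mod_cast hn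
      have h1 : ((m : ℝ) - 3) < (1-b) * ((m:ℝ) + 3) := by
        rw [div_lt_iff₀ ht] at hfl2; nlinarith
      nlinarith
    · calc (1-b) * (⌊((m : ℝ) - 3)/(1-b)⌋₊ : ℝ) ≤ (1-b) * (((m : ℝ) - 3)/(1-b)) := by
            apply mul_le_mul_of_nonneg_left hfl (le_of_lt ht)
        _ = (m:ℝ) - 3 := by field_simp
  intro k
  induction k with
  | zero =>
    have h0 : (7:ℝ)/b ≤ nseq b 0 := by
      show (7:ℝ)/b ≤ ((⌈(7:ℝ)/b⌉₊ + 3 : ℕ) : ℝ)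
      push_cast
      have := Nat.le_ceil ((7:ℝ)/b)
      linarith
    have hs := key _ h0
    have he : nseq b 1 = ⌊((nseq b 0 : ℝ) - 3)/(1-b)⌋₊ := by conv_lhs => rw [nseq]
    exact ⟨h0, by rw [he]; exact hs.1, by rw [he]; exact hs.2⟩
  | succ k ih =>
    obtain ⟨h1, h2, h3⟩ := ih
    have h0 : (7:ℝ)/b ≤ nseq b (k+1) := by
      have : (nseq b k : ℝ) ≤ nseq b (k+1) := by exact_mod_cast Nat.le_of_lt (by omega)
      linarith
    have hs := key _ h0
    have he : nseq b (k+2) = ⌊((nseq b (k+1) : ℝ) - 3)/(1-b)⌋₊ := by conv_lhs => rw [nseq]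
    exact ⟨h0, by rw [he]; exact hs.1, by rw [he]; exact hs.2⟩

include hb0 hb1 in
lemma nseq_mono3 : ∀ j k : ℕ, j < k → nseq b j + 3 ≤ nseq b k := by
  intro j k hjk
  induction k with
  | zero => omega
  | succ k ih =>
    have h := (nseq_facts hb0 hb1 k).2.1
    rcases Nat.lt_succ_iff_lt_or_eq.mp hjk with h' | h'
    · have := ih h'; omega
    · subst h'; omega

include hb0 hb1 in
lemma nseq_ge7 : ∀ k : ℕ, (7:ℝ) ≤ (nseq b k : ℝ) ∧ 7 ≤ b * nseq b k := by
  intro k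
  have h := (nseq_facts hb0 hb1 k).1
  have h7b : (7:ℝ) < 7/b := by rw [lt_div_iff₀ hb0]; nlinarith
  refine ⟨by linarith, ?_⟩
  rw [div_le_iff₀ hb0] at h; linarith

include hb0 hb1 in
lemma nseq_ge10 : ∀ k : ℕ, 10 ≤ nseq b k := by
  intro k
  have h := (nseq_ge7 hb0 hb1 k).1
  have h0 : 7 ≤ nseq b 0 := by exact_mod_cast (nseq_ge7 hb0 hb1 0).1
  cases k with
  | zero =>
    have : 7 ≤ ⌈(7:ℝ)/b⌉₊ := by
      have := (nseq_ge7 hb0 hb1 0).1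
      show 7 ≤ ⌈(7:ℝ)/b⌉₊
      have h7b : (7:ℝ) < 7/b := by rw [lt_div_iff₀ hb0]; nlinarith
      have := Nat.le_ceil ((7:ℝ)/b)
      by_contra hc
      push_neg at hc
      have : (⌈(7:ℝ)/b⌉₊ : ℝ) ≤ 6 := by exact_mod_cast Nat.le_of_lt_succ hc
      linarith
    show 10 ≤ ⌈(7:ℝ)/b⌉₊ + 3
    omega
  | succ k =>
    have := nseq_mono3 hb0 hb1 0 (k+1) (by omega)
    omega

-- vseq monotone and ≥ 1
include hb0 hb1 in
lemma vseq_step_ge1 : ∀ k : ℕ, (1:ℤ) ≤ ⌊b * (nseq b (k+1) : ℝ)⌋ := by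
  intro k
  rw [Int.le_floor]
  have := (nseq_ge7 hb0 hb1 (k+1)).2
  push_cast
  linarith

include hb0 hb1 in
lemma vseq_ge1 : ∀ k : ℕ, (1:ℤ) ≤ vseq b k := by
  intro k
  induction k with
  | zero => exact le_refl 1
  | succ k ih =>
    have h := vseq_step_ge1 hb0 hb1 k
    show (1:ℤ) ≤ vseq b k + ⌊b * (nseq b (k+1) : ℝ)⌋
    omega

-- deficiency decrease
include hb0 hb1 in
lemma c_dec : ∀ k : ℕ, (nseq b (k+1) : ℤ) - vseq b (k+1) ≤ (nseq b k : ℤ) - vseq b k - 2 := by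
  intro k
  have h3 := (nseq_facts hb0 hb1 k).2.2
  have hfl : b * (nseq b (k+1) : ℝ) - 1 < (⌊b * (nseq b (k+1) : ℝ)⌋ : ℝ) := Int.sub_one_lt_floor _
  have hv : vseq b (k+1) = vseq b k + ⌊b * (nseq b (k+1) : ℝ)⌋ := rfl
  have hreal : ((nseq b (k+1) : ℤ) - vseq b (k+1) : ℝ) < ((nseq b k : ℤ) - vseq b k - 2 : ℝ) := by
    rw [hv]
    push_cast
    nlinarith
  have hr2 : (((nseq b (k+1) : ℤ) - vseq b (k+1) : ℤ) : ℝ) < (((nseq b k : ℤ) - vseq b k - 2 : ℤ) : ℝ) := by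
    push_cast
    push_cast at hreal
    linarith
  have hz : ((nseq b (k+1) : ℤ) - vseq b (k+1) : ℤ) < ((nseq b k : ℤ) - vseq b k - 2 : ℤ) := by exact_mod_cast hr2
  omega

include hb0 hb1 in
lemma c_le_c0 : ∀ k : ℕ, (nseq b k : ℤ) - vseq b k ≤ (nseq b 0 : ℤ) - vseq b 0 := by
  intro k
  induction k with
  | zero => exact le_refl _
  | succ k ih => have := c_dec hb0 hb1 k; omega

include hb0 hb1 in
lemma exists_K : ∃ k : ℕ, (nseq b k : ℤ) < vseq b k := by
  have hd : ∀ k : ℕ, (nseq b k : ℤ) - vseq b k ≤ (nseq b 0 : ℤ) - vseq b 0 - 2 * k := by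
    intro k
    induction k with
    | zero => simp
    | succ k ih => have := c_dec hb0 hb1 k; push_cast; push_cast at ih; omega
  refine ⟨nseq b 0, ?_⟩
  have := hd (nseq b 0)
  have h1 := vseq_ge1 hb0 hb1 0
  omega


variable {K : ℕ} (hKv : (nseq b K : ℤ) < vseq b K)
  (hKmin : ∀ j, j < K → vseq b j ≤ (nseq b j : ℤ)) (hK1 : 1 ≤ K)

include hb0 hb1 in
lemma g_spike : ∀ k, 1 ≤ k → k ≤ K → gfun b K (nseq b k) = vseq b k := by
  intro k hk1 hkK
  have h10 := nseq_ge10 hb0 hb1 k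
  have hP : ∃ k', 1 ≤ k' ∧ k' ≤ K ∧ nseq b k = nseq b k' := ⟨k, hk1, hkK, rfl⟩
  unfold gfun
  rw [if_neg (by omega), dif_pos hP]
  have hc := hP.choose_spec
  congr 1
  rcases lt_trichotomy hP.choose k with h | h | h
  · have := nseq_mono3 hb0 hb1 _ _ h; omega
  · omega
  · have := nseq_mono3 hb0 hb1 _ _ h; omega

include hb0 hb1 in
lemma g_ptr : ∀ k, 1 ≤ k → k ≤ K →
    gfun b K (nseq b k - 1) = (nseq b k : ℤ) - (nseq b (k-1) : ℤ) := by
  intro k hk1 hkK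
  have h10 := nseq_ge10 hb0 hb1 k
  have hnsp : ¬∃ k', 1 ≤ k' ∧ k' ≤ K ∧ nseq b k - 1 = nseq b k' := by
    rintro ⟨j, hj1, hjK, hje⟩
    rcases lt_trichotomy j k with h | h | h
    · have := nseq_mono3 hb0 hb1 _ _ h; omega
    · subst h; omega
    · have := nseq_mono3 hb0 hb1 _ _ h; omega
  have hP : ∃ k', 1 ≤ k' ∧ k' ≤ K ∧ nseq b k - 1 = nseq b k' - 1 := ⟨k, hk1, hkK, rfl⟩
  unfold gfun
  rw [if_neg (by omega), dif_neg hnsp, dif_pos hP]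
  have hc := hP.choose_spec
  have h10' := nseq_ge10 hb0 hb1 hP.choose
  have : hP.choose = k := by
    rcases lt_trichotomy hP.choose k with h | h | h
    · have := nseq_mono3 hb0 hb1 _ _ h; omega
    · omega
    · have := nseq_mono3 hb0 hb1 _ _ h; omega
  rw [this]

lemma g_plain : ∀ m, 1 ≤ m →
    (∀ k, 1 ≤ k → k ≤ K → m ≠ nseq b k ∧ m ≠ nseq b k - 1) → gfun b K m = 1 := by
  intro m hm hn
  unfold gfun
  rw [if_neg (by omega), dif_neg, dif_neg]
  · rintro ⟨j, hj1, hjK, hje⟩; exact (hn j hj1 hjK).2 hje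
  · rintro ⟨j, hj1, hjK, hje⟩; exact (hn j hj1 hjK).1 hje

include hb0 hb1 hKmin in
lemma g_bnd : ∀ j : ℕ, 1 ≤ j → j < nseq b K →
    1 ≤ gfun b K j ∧ gfun b K j ≤ (j : ℤ) := by
  intro j hj1 hjN
  by_cases hsp : ∃ k, 1 ≤ k ∧ k ≤ K ∧ j = nseq b k
  · obtain ⟨k, hk1, hkK, rfl⟩ := hsp
    rw [g_spike hb0 hb1 k hk1 hkK]
    have hkK' : k < K := by
      rcases Nat.lt_or_ge k K with h | h
      · exact h
      · exfalso; have : k = K := by omega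
        subst this; omega
    have := hKmin k hkK'
    have := vseq_ge1 hb0 hb1 k
    omega
  · by_cases hpt : ∃ k, 1 ≤ k ∧ k ≤ K ∧ j = nseq b k - 1
    · obtain ⟨k, hk1, hkK, rfl⟩ := hpt
      rw [g_ptr hb0 hb1 k hk1 hkK]
      have h3 := nseq_mono3 hb0 hb1 (k-1) k (by omega)
      have h10 := nseq_ge10 hb0 hb1 (k-1)
      have h10' := nseq_ge10 hb0 hb1 k
      constructor
      · omega
      · omega
    · push_neg at hsp hpt
      rw [g_plain j hj1 (fun k hk1 hkK => ⟨hsp k hk1 hkK, hpt k hk1 hkK⟩)]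
      omega

include hb0 hb1 in
lemma g_one : gfun b K 1 = 1 := by
  apply g_plain 1 le_rfl
  intro k hk1 hkK
  have := nseq_mono3 hb0 hb1 0 k hk1
  have := nseq_ge10 hb0 hb1 0
  omega

include hb0 hb1 hKmin in
lemma Qeq : ∀ m, m ≤ nseq b K → Qseq (ffun b K) m = gfun b K m := by
  intro m
  induction m using Nat.strong_induction_on with
  | _ m ih =>
    match m with
    | 0 => intro _; rw [Qseq]; simp [gfun]
    | 1 => intro _; rw [Qseq, g_one hb0 hb1]
    | p + 2 =>
      intro hm
      have ih1 : Qseq (ffun b K) (p+1) = gfun b K (p+1) := ih (p+1) (by omega) (by omega)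
      have hb' := g_bnd hb0 hb1 hKmin (p+1) (by omega) (by omega)
      rw [Qseq, ih1]
      have hi0 : min (((p : ℤ) + 2 - gfun b K (p+1)).toNat) (p+1)
          = (((p+2 : ℕ) : ℤ) - gfun b K (p+1)).toNat := by
        omega
      rw [hi0]
      set i0 := (((p+2 : ℕ) : ℤ) - gfun b K (p+1)).toNat with hi0e
      have hi1 : 1 ≤ i0 ∧ i0 ≤ p + 1 := by
        constructor <;> omega
      rw [ih i0 (by omega) (by omega)]
      have hf : ffun b K (p+2) = gfun b K (p+2) - gfun b K i0 := by
        unfold ffun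
        rw [if_pos ⟨by omega, hm⟩]
        rw [show p + 2 - 1 = p + 1 from rfl]
      rw [hf]; ring

include hb0 hb1 hKmin in
lemma f_cone_mid : ∀ n, 2 ≤ n → n ≤ nseq b K →
    0 ≤ ffun b K n ∧ ffun b K n ≤ ⌊b * (n : ℝ)⌋ := by
  intro n hn2 hnN
  have hfl0 : (0:ℤ) ≤ ⌊b * (n : ℝ)⌋ := by
    apply Int.floor_nonneg.mpr; positivity
  have hfeq : ffun b K n = gfun b K n - gfun b K (((n : ℤ) - gfun b K (n-1)).toNat) := by
    unfold ffun; rw [if_pos ⟨hn2, hnN⟩]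
  by_cases hsp : ∃ k, 1 ≤ k ∧ k ≤ K ∧ n = nseq b k
  · -- spike
    obtain ⟨k, hk1, hkK, rfl⟩ := hsp
    have h3 := nseq_mono3 hb0 hb1 (k-1) k (by omega)
    have h10 := nseq_ge10 hb0 hb1 (k-1)
    have h10' := nseq_ge10 hb0 hb1 k
    have hgm1 : gfun b K (nseq b k - 1) = (nseq b k : ℤ) - (nseq b (k-1) : ℤ) :=
      g_ptr hb0 hb1 k hk1 hkK
    have hto : (((nseq b k : ℕ) : ℤ) - ((nseq b k : ℤ) - (nseq b (k-1) : ℤ))).toNat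
        = nseq b (k-1) := by omega
    have hgi : gfun b K (nseq b (k-1)) = vseq b (k-1) := by
      rcases Nat.eq_or_lt_of_le hk1 with h | h
      · have hk0 : k - 1 = 0 := by omega
        have h100 := nseq_ge10 hb0 hb1 0
        rw [hk0]
        rw [g_plain (nseq b 0) (by omega) ?_]
        · rfl
        · intro j hj1 hjK
          have := nseq_mono3 hb0 hb1 0 j hj1
          have := nseq_ge10 hb0 hb1 j
          omega
      · exact g_spike hb0 hb1 (k-1) (by omega) (by omega)
    have hveq : vseq b k = vseq b (k-1) + ⌊b * (nseq b k : ℝ)⌋ := by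
      have : k = (k-1) + 1 := by omega
      rw [this]; rfl
    rw [hfeq, hgm1, hto, hgi, g_spike hb0 hb1 k hk1 hkK, hveq]
    constructor
    · omega
    · omega
  · by_cases hpt : ∃ k, 1 ≤ k ∧ k ≤ K ∧ n = nseq b k - 1
    · -- pointer
      obtain ⟨k, hk1, hkK, rfl⟩ := hpt
      have h3 := nseq_mono3 hb0 hb1 (k-1) k (by omega)
      have h10 := nseq_ge10 hb0 hb1 (k-1)
      have h10' := nseq_ge10 hb0 hb1 k
      have hgm1 : gfun b K (nseq b k - 1 - 1) = 1 := by
        apply g_plain _ (by omega)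
        intro j hj1 hjK
        rcases lt_trichotomy j k with h | h | h
        · have := nseq_mono3 hb0 hb1 j k h
          have := nseq_ge10 hb0 hb1 j
          omega
        · subst h; omega
        · have := nseq_mono3 hb0 hb1 k j h; omega
      have hto : ((((nseq b k - 1 : ℕ)) : ℤ) - 1).toNat = nseq b k - 1 - 1 := by omega
      have hgi : gfun b K (nseq b k - 1 - 1) = 1 := hgm1
      have hgn : gfun b K (nseq b k - 1) = (nseq b k : ℤ) - (nseq b (k-1) : ℤ) :=
        g_ptr hb0 hb1 k hk1 hkK
      have hm1eq : nseq b k - 1 - 1 = ((((nseq b k - 1 : ℕ)) : ℤ) - gfun b K (nseq b k - 1 - 1)).toNat := by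
        rw [hgm1]; omega
      rw [hfeq, hgn]
      rw [show (nseq b k - 1) - 1 = nseq b k - 1 - 1 from rfl, hgm1]
      rw [show ((((nseq b k - 1 : ℕ)) : ℤ) - 1).toNat = nseq b k - 1 - 1 from hto, hgi]
      constructor
      · omega
      · -- n_k - n_{k-1} - 1 - 1 + ... ≤ ⌊b (n_k - 1)⌋
        rw [Int.le_floor]
        have hfk := (nseq_facts hb0 hb1 (k-1)).2.2
        have hkk : (k-1) + 1 = k := by omega
        rw [hkk] at hfk
        push_cast
        have hcast : ((nseq b k - 1 : ℕ) : ℝ) = (nseq b k : ℝ) - 1 := by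
          push_cast [Nat.cast_sub (by omega : 1 ≤ nseq b k)]; ring
        rw [hcast]
        nlinarith [hb1, hb0]
    · -- plain n
      push_neg at hsp hpt
      have hgn : gfun b K n = 1 := g_plain n (by omega) (fun k hk1 hkK => ⟨hsp k hk1 hkK, hpt k hk1 hkK⟩)
      by_cases hsp1 : ∃ j, 1 ≤ j ∧ j ≤ K ∧ n - 1 = nseq b j
      · -- n - 1 spike
        obtain ⟨j, hj1, hjK, hje⟩ := hsp1
        have h10 := nseq_ge10 hb0 hb1 j
        have hjK' : j < K := by
          rcases Nat.lt_or_ge j K with h | h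
          · exact h
          · exfalso
            have hjeq : j = K := by omega
            rw [hjeq] at hje
            omega
        have hgm1 : gfun b K (n-1) = vseq b j := by rw [hje]; exact g_spike hb0 hb1 j hj1 hjK
        have hv1 := vseq_ge1 hb0 hb1 j
        have hvn := hKmin j hjK'
        have hcc := c_le_c0 hb0 hb1 j
        have h100 := nseq_ge10 hb0 hb1 0
        have hgl : gfun b K (((n : ℤ) - vseq b j).toNat) = 1 := by
          apply g_plain _ (by omega)
          intro i hi1 hiK
          have := nseq_mono3 hb0 hb1 0 i hi1
          have := nseq_ge10 hb0 hb1 i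
          have hv0 : vseq b 0 = 1 := rfl
          constructor <;> omega
        rw [hfeq, hgm1, hgl, hgn]
        omega
      · by_cases hpt1 : ∃ j, 1 ≤ j ∧ j ≤ K ∧ n - 1 = nseq b j - 1
        · exfalso
          obtain ⟨j, hj1, hjK, hje⟩ := hpt1
          have h10 := nseq_ge10 hb0 hb1 j
          exact hsp j hj1 hjK (by omega)
        · push_neg at hsp1 hpt1
          have hgm1 : gfun b K (n-1) = 1 :=
            g_plain (n-1) (by omega) (fun k hk1 hkK => ⟨hsp1 k hk1 hkK, hpt1 k hk1 hkK⟩)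
          have hto : (((n:ℕ):ℤ) - 1).toNat = n - 1 := by omega
          rw [hfeq, hgm1, hto, hgm1, hgn]
          omega
end

/-- For every `b ∈ (0,1)` there exists `a* ∈ (0,b)` such that for
every `a ∈ (0, a*]` there is a sequence `f` in the linear cone `𝓒(a,b)` (i.e.
`⌊an⌋ ≤ f(n) ≤ ⌊bn⌋` for all `n ≥ 1`) which is not in `𝓕`. -/
theorem stmt_15 (b : ℝ) (hb0 : 0 < b) (hb1 : b < 1) :
    ∃ astar : ℝ, 0 < astar ∧ astar < b ∧
      ∀ a : ℝ, 0 < a → a ≤ astar →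
        ∃ f : ℕ → ℤ,
          (∀ n : ℕ, 1 ≤ n → ⌊a * (n : ℝ)⌋ ≤ f n ∧ f n ≤ ⌊b * (n : ℝ)⌋) ∧
          ¬ memF f := by
  classical
  have hex := exists_K hb0 hb1
  set K := Nat.find hex with hKdef
  have hKv : (nseq b K : ℤ) < vseq b K := Nat.find_spec hex
  have hKmin : ∀ j, j < K → vseq b j ≤ (nseq b j : ℤ) := fun j hj => not_lt.mp (Nat.find_min hex hj)
  have hK1 : 1 ≤ K := by
    rcases Nat.eq_zero_or_pos K with h | h
    · exfalso
      rw [h] at hKv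
      have h10 := nseq_ge10 hb0 hb1 0
      have hv0 : vseq b 0 = 1 := rfl
      omega
    · exact h
  set N := nseq b K with hN
  have hN10 : 10 ≤ N := nseq_ge10 hb0 hb1 K
  have hNp : (0:ℝ) < (N:ℝ) + 1 := by positivity
  refine ⟨min (b/2) (1/((N:ℝ)+1)), by positivity, lt_of_le_of_lt (min_le_left _ _) (by linarith), ?_⟩
  intro a ha0 haa
  have hab : a ≤ b := le_trans haa (le_trans (min_le_left _ _) (by linarith))
  have haN : a * ((N:ℝ)+1) ≤ 1 := by
    have h2 : a ≤ 1/((N:ℝ)+1) := le_trans haa (min_le_right _ _)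
    exact (le_div_iff₀ hNp).mp h2
  refine ⟨ffun b K, ?_, ?_⟩
  · intro n hn1
    have hn0 : (0:ℝ) ≤ (n:ℝ) := by positivity
    have habn : ⌊a * (n:ℝ)⌋ ≤ ⌊b * (n:ℝ)⌋ :=
      Int.floor_le_floor (mul_le_mul_of_nonneg_right hab hn0)
    have hbf0 : (0:ℤ) ≤ ⌊b * (n:ℝ)⌋ := Int.floor_nonneg.mpr (by positivity)
    by_cases hle : n ≤ N
    · have hfz : ⌊a * (n:ℝ)⌋ = 0 := by
        rw [Int.floor_eq_zero_iff]
        constructor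
        · positivity
        · have h1 : (n:ℝ) ≤ N := Nat.cast_le.mpr hle
          have h5 : a * (n:ℝ) ≤ a * (N:ℝ) := mul_le_mul_of_nonneg_left h1 ha0.le
          nlinarith
      by_cases h2 : 2 ≤ n
      · have hc := f_cone_mid hb0 hb1 hKmin n h2 hle
        exact ⟨by omega, hc.2⟩
      · have hn1' : n = 1 := by omega
        subst hn1'
        have hf1 : ffun b K 1 = 0 := by
          unfold ffun
          rw [if_neg (by omega), if_pos (by omega)]
        rw [hf1]
        exact ⟨by omega, hbf0⟩
    · have hfb : ffun b K n = ⌊b * (n:ℝ)⌋ := by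
        unfold ffun
        rw [if_neg (by omega), if_neg (by omega)]
      rw [hfb]
      exact ⟨habn, le_refl _⟩
  · rintro ⟨hf1, hq⟩
    have hQN : Qseq (ffun b K) N = vseq b K := by
      rw [Qeq hb0 hb1 hKmin N (le_refl _)]
      exact g_spike hb0 hb1 K hK1 (le_refl _)
    have hub := (hq N (by omega)).2
    rw [hQN] at hub
    omega
end

section
/- Fix real numbers a > 1/4 and b > 0, and set c = (1 + 4b)/3 and d = (12a − 3)/4. Suppose there exist ε ∈ (0, d/(4b)] and an integer n₀ ≥ 4 with εn₀ ≥ max{4c, 2d}, and a sequence f₀ ∈ 𝓕_{n₀} such that q₀ = Q(f₀) ∈ 𝓠_{n₀} satisfies (1/3 + ε)k ≤ q₀(k) ≤ (3/4 − ε)k for all k with n₀/4 ≤ k ≤ n₀. Let f be any integer sequence with f(n) = f₀(n) for n ≤ n₀ and n/4 − a ≤ f(n) ≤ n/4 + b for all n > n₀. Then q = Q(f) ∈ 𝓠 (so f ∈ 𝓕), q(n) = q₀(n) for n ≤ n₀, and n/3 + c ≤ q(n) ≤ (3/4)n − d for all n ≥ n₀. -/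
/-- (Strip-shaped subset of `𝓕` with gradient `1/4`.)
With `a > 1/4`, `b > 0`, `c = (1+4b)/3`, `d = (12a-3)/4`, `ε ∈ (0, d/(4b)]`,
`n₀ ≥ 4`, `εn₀ ≥ max{4c, 2d}`: if the restriction of `f` to `{1,…,n₀}` is in
`𝓕_{n₀}` with `(1/3 + ε)k ≤ q(k) ≤ (3/4 - ε)k` for `n₀/4 ≤ k ≤ n₀`, and
`n/4 - a ≤ f(n) ≤ n/4 + b` for all `n > n₀`, then `f ∈ 𝓕` and
`n/3 + c ≤ q(n) ≤ (3/4)n - d` for all `n ≥ n₀`. -/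
theorem stmt_17 (a b : ℝ) (ha : 1/4 < a) (hb : 0 < b)
    (c d : ℝ) (hc : c = (1 + 4*b)/3) (hd : d = (12*a - 3)/4)
    (ε : ℝ) (hε0 : 0 < ε) (hε1 : ε ≤ d/(4*b))
    (n₀ : ℕ) (hn₀ : 4 ≤ n₀) (hεn₀ : max (4*c) (2*d) ≤ ε * (n₀ : ℝ))
    (f : ℕ → ℤ)
    (hseg : memFn n₀ f)
    (hq₀ : ∀ k : ℕ, (n₀ : ℝ)/4 ≤ (k : ℝ) → k ≤ n₀ →
      (1/3 + ε) * (k : ℝ) ≤ (Qseq f k : ℝ) ∧ (Qseq f k : ℝ) ≤ (3/4 - ε) * (k : ℝ))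
    (hfb : ∀ n : ℕ, n₀ < n →
      (n : ℝ)/4 - a ≤ (f n : ℝ) ∧ (f n : ℝ) ≤ (n : ℝ)/4 + b) :
    memF f ∧
    ∀ n : ℕ, n₀ ≤ n →
      (n : ℝ)/3 + c ≤ (Qseq f n : ℝ) ∧ (Qseq f n : ℝ) ≤ 3/4 * (n : ℝ) - d := by
  obtain ⟨hf1, hQn⟩ := hseg
  subst hc; subst hd
  set c : ℝ := (1 + 4*b)/3 with hc
  set d : ℝ := (12*a - 3)/4 with hd
  have hd0 : 0 < d := by rw [hd]; linarith
  have hc0 : 1/3 < c := by rw [hc]; linarith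
  have hn₀R : (4:ℝ) ≤ (n₀:ℝ) := by exact_mod_cast hn₀
  have h4c : 4*c ≤ ε * n₀ := le_trans (le_max_left _ _) hεn₀
  have h2d : 2*d ≤ ε * n₀ := le_trans (le_max_right _ _) hεn₀
  have h4bε : ε * (4*b) ≤ d := (le_div_iff₀ (by linarith : (0:ℝ) < 4*b)).mp hε1
  have hε34 : ε ≤ 3/4 := by
    have h := hq₀ n₀ (by linarith) le_rfl
    have h' := h.1.trans h.2
    nlinarith [h', hn₀R, hε0]
  have key : ∀ n : ℕ, n₀ ≤ n →
      (n:ℝ)/3 + c ≤ (Qseq f n : ℝ) ∧ (Qseq f n : ℝ) ≤ 3/4 * (n:ℝ) - d := by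
    intro n
    induction n using Nat.strong_induction_on with
    | _ n IH =>
    intro hn
    rcases eq_or_lt_of_le hn with heq | hlt
    · subst heq
      obtain ⟨h1, h2⟩ := hq₀ n₀ (by linarith) le_rfl
      constructor
      · linarith [h1, h4c, hc0]
      · linarith [h2, h2d, hd0]
    · obtain ⟨n', rfl⟩ : ∃ n', n = n' + 2 := ⟨n - 2, by omega⟩
      have hn'3 : 3 ≤ n' := by omega
      have hn'R : (3:ℝ) ≤ (n':ℝ) := by exact_mod_cast hn'3
      have hprev := IH (n'+1) (by omega) (by omega)
      push_cast at hprev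
      set q1 := Qseq f (n'+1) with hq1def
      have hq1geR : (1:ℝ) ≤ (q1:ℝ) := by linarith [hprev.1]
      have hq1leR : (q1:ℝ) ≤ (n':ℝ) + 1 := by linarith [hprev.2]
      have hq1ge : (1:ℤ) ≤ q1 := by exact_mod_cast hq1geR
      have hq1le : q1 ≤ (n':ℤ) + 1 := by exact_mod_cast hq1leR
      set m : ℕ := (((n':ℤ) + 2) - q1).toNat with hmdef
      have hmZ : (m:ℤ) = (n':ℤ) + 2 - q1 := by omega
      have hmin : min (((n':ℤ) + 2 - Qseq f (n' + 1)).toNat) (n' + 1) = m := by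
        rw [← hq1def]; omega
      have hrec : Qseq f (n'+2) = Qseq f m + f (n'+2) := by
        rw [Qseq, hmin]
      have hmR : (m:ℝ) = (n':ℝ) + 2 - (q1:ℝ) := by exact_mod_cast hmZ
      have hmlo : ((n':ℝ)+2)/4 + 3/4 + d ≤ (m:ℝ) := by rw [hmR]; linarith [hprev.2]
      have hmhi : (m:ℝ) ≤ 2*((n':ℝ)+2)/3 + 1/3 - c := by rw [hmR]; linarith [hprev.1]
      have hnn₀ : (n₀:ℝ) + 1 ≤ (n':ℝ) + 2 := by
        have : n₀ + 1 ≤ n' + 2 := by omega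
        exact_mod_cast this
      have hfn := hfb (n'+2) hlt
      push_cast at hfn
      rw [hrec]
      push_cast
      rcases le_or_gt m n₀ with hm | hm
      · have hmn₀R : (m:ℝ) ≤ (n₀:ℝ) := by exact_mod_cast hm
        obtain ⟨hl, hu⟩ := hq₀ m (by linarith) hm
        have e1 : ε * (((n':ℝ)+2)/4 + 3/4 + d) ≤ ε * (m:ℝ) :=
          mul_le_mul_of_nonneg_left hmlo hε0.le
        have e2 : ε * ((n₀:ℝ)+1) ≤ ε * ((n':ℝ)+2) :=
          mul_le_mul_of_nonneg_left hnn₀ hε0.le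
        have e3 : (0:ℝ) ≤ ε * d := mul_nonneg hε0.le hd0.le
        have ecb : ε * c = ε/3 + (4/3)*(ε*b) := by rw [hc]; ring
        have h34 : (0:ℝ) ≤ 3/4 - ε := by linarith
        constructor
        · linarith [hl, hfn.1, hmlo, e1, e2, e3, h4c, hd, hε0.le]
        · rcases le_or_gt (n₀:ℝ) (2*((n':ℝ)+2)/3 + 1/3 - c) with hsub | hsub
          · have g1 : (3/4 - ε) * (m:ℝ) ≤ (3/4 - ε) * (n₀:ℝ) :=
              mul_le_mul_of_nonneg_left hmn₀R h34
            linarith [hu, g1, hfn.2, hsub, hc, h2d, hd0]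
          · have g2 : (3/4 - ε) * (m:ℝ) ≤ (3/4 - ε) * (2*((n':ℝ)+2)/3 + 1/3 - c) :=
              mul_le_mul_of_nonneg_left hmhi h34
            linarith [hu, g2, e2, ecb, hc, h2d, h4bε, hfn.2, hε0.le]
      · have hmlt : m < n' + 2 := by omega
        have hIHm := IH m hmlt (by omega)
        constructor
        · linarith [hIHm.1, hfn.1, hmlo]
        · linarith [hIHm.2, hfn.2, hmhi]
  refine ⟨⟨hf1, ?_⟩, fun n hn => key n hn⟩
  intro i hi
  rcases le_or_gt i n₀ with h | h
  · exact hQn i hi h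
  · have hk := key i h.le
    have hiR : (4:ℝ) ≤ (i:ℝ) := by
      have : (4:ℕ) ≤ i := by omega
      exact_mod_cast this
    constructor
    · have : (1:ℝ) ≤ (Qseq f i : ℝ) := by linarith [hk.1]
      exact_mod_cast this
    · have : (Qseq f i : ℝ) ≤ (i:ℝ) := by linarith [hk.2]
      exact_mod_cast this
end
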